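/- arXiv:2504.15518 — 9 statements merged into one kernel-verified Lean document; each statement's English description precedes it below -/
import Mathlib

section
/- For any matroid M and any element i of its ground set that is neither a loop nor a coloop, the beta invariant satisfies the deletion-contraction recursion β(M) = β(M\i) + β(M/i). -/
open Finset Pointwise

/-- A matroid on a finite ground set `E ⊆ α`, given by its rank function. -/
structure Matr (α : Type) [DecidableEq α] where
  E : Finset α
  rk : Finset α → ℕ
  rk_inter : ∀ A, rk (A ∩ E) = rk A
  rk_empty : rk ∅ = 0
  rk_le_card : ∀ A, A ⊆ E → rk A ≤ A.card
  rk_mono : ∀ ⦃A B : Finset α⦄, A ⊆ B → rk A ≤ rk B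
  rk_submod : ∀ A B, rk (A ∪ B) + rk (A ∩ B) ≤ rk A + rk B

namespace Matr

variable {α : Type} [DecidableEq α]

/-- Crapo's beta invariant `β(M) = (-1)^{rk E} ∑_{A ⊆ E} (-1)^{|A|} rk(A)`. -/
def beta (M : Matr α) : ℤ :=
  (-1) ^ (M.rk M.E) * ∑ A ∈ M.E.powerset, (-1) ^ A.card * (M.rk A : ℤ)

/-- A basis: an independent spanning subset of the ground set. -/
def IsBase (M : Matr α) (B : Finset α) : Prop :=
  B ⊆ M.E ∧ B.card = M.rk M.E ∧ M.rk B = B.card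

def IsLoop (M : Matr α) (i : α) : Prop := i ∈ M.E ∧ M.rk {i} = 0

def IsColoop (M : Matr α) (i : α) : Prop := i ∈ M.E ∧ ∀ B, M.IsBase B → i ∈ B

/-- A matroid is disconnected if its ground set splits into two nonempty parts
on which the rank function is additive. -/
def IsDisconnected (M : Matr α) : Prop :=
  ∃ E₁ E₂ : Finset α, E₁ ∪ E₂ = M.E ∧ Disjoint E₁ E₂ ∧ E₁.Nonempty ∧ E₂.Nonempty ∧
    ∀ A ⊆ M.E, M.rk A = M.rk (A ∩ E₁) + M.rk (A ∩ E₂)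

end Matr

/-- The base polytope `P(M) = conv{ e_B : B a basis of M }`. -/
def basePolytope {α : Type} [DecidableEq α] [Fintype α] (M : Matr α) : Set (α → ℝ) :=
  convexHull ℝ {x | ∃ B, M.IsBase B ∧ x = fun i => if i ∈ B then (1 : ℝ) else 0}

/-- `p` is the Ehrhart polynomial of the base polytope of `M`:
for every positive integer `t`, `p(t)` is the number of lattice points of `t·P(M)`. -/
def IsEhrhart {α : Type} [DecidableEq α] [Fintype α] (M : Matr α) (p : Polynomial ℚ) : Prop :=
  ∀ t : ℕ, 0 < t →
    p.eval (t : ℚ) =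
      Set.ncard {x : α → ℤ | (fun i => (x i : ℝ)) ∈ (t : ℝ) • basePolytope M}

/-- **Deletion–contraction for the beta invariant.** If `i` is neither a loop nor a
coloop of `M`, and `D`, `C` are the deletion `M\i` and contraction `M/i`
respectively, then `β(M) = β(M\i) + β(M/i)`. -/
theorem beta_deletion_contraction {α : Type} [DecidableEq α]
    (M D C : Matr α) (i : α) (hi : i ∈ M.E)
    (hloop : ¬ M.IsLoop i) (hcoloop : ¬ M.IsColoop i)
    (hDE : D.E = M.E.erase i)
    (hDrk : ∀ A ⊆ M.E.erase i, D.rk A = M.rk A)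
    (hCE : C.E = M.E.erase i)
    (hCrk : ∀ A ⊆ M.E.erase i, C.rk A = M.rk (insert i A) - M.rk {i}) :
    M.beta = D.beta + C.beta := by
  classical
  set s : Finset α := M.E.erase i with hs
  have his : i ∉ s := Finset.notMem_erase i M.E
  have hEi : insert i s = M.E := Finset.insert_erase hi
  have hr1 : M.rk {i} = 1 := by
    have h1 : M.rk {i} ≤ 1 := by
      simpa using M.rk_le_card {i} (Finset.singleton_subset_iff.mpr hi)
    have h0 : M.rk {i} ≠ 0 := fun h => hloop ⟨hi, h⟩
    omega
  obtain ⟨B, hB, hiB⟩ : ∃ B, M.IsBase B ∧ i ∉ B := by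
    by_contra h
    push_neg at h
    exact hcoloop ⟨hi, fun B hBb => h B hBb⟩
  have hBs : B ⊆ s := Finset.subset_erase.mpr ⟨hB.1, hiB⟩
  have hrE : M.rk s = M.rk M.E := by
    refine le_antisymm (M.rk_mono (Finset.erase_subset i M.E)) ?_
    calc M.rk M.E = B.card := hB.2.1.symm
      _ = M.rk B := hB.2.2.symm
      _ ≤ M.rk s := M.rk_mono hBs
  have hrge : 1 ≤ M.rk M.E := hr1 ▸ M.rk_mono (Finset.singleton_subset_iff.mpr hi)
  have hsne : s.Nonempty := by
    rcases s.eq_empty_or_nonempty with h | h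
    · exfalso
      have hBe : B = ∅ := Finset.subset_empty.mp (h ▸ hBs)
      have := hB.2.1
      rw [hBe, Finset.card_empty] at this
      omega
    · exact h
  obtain ⟨m, hm⟩ : ∃ m, M.rk M.E = m + 1 := ⟨M.rk M.E - 1, by omega⟩
  have hzero : ∑ A ∈ s.powerset, (-1 : ℤ) ^ A.card = 0 :=
    Finset.sum_powerset_neg_one_pow_card_of_nonempty hsne
  have hrkins : ∀ A ∈ s.powerset, ((C.rk A : ℤ)) = (M.rk (insert i A) : ℤ) - 1 := by
    intro A hA
    have hAs : A ⊆ s := Finset.mem_powerset.mp hA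
    have h1 : 1 ≤ M.rk (insert i A) := by
      calc 1 = M.rk {i} := hr1.symm
        _ ≤ M.rk (insert i A) := M.rk_mono (Finset.singleton_subset_iff.mpr (Finset.mem_insert_self i A))
    rw [hCrk A hAs, hr1]
    push_cast [Nat.cast_sub h1]
    ring
  have hD : D.beta = (-1 : ℤ) ^ (M.rk M.E) * ∑ A ∈ s.powerset, (-1 : ℤ) ^ A.card * (M.rk A : ℤ) := by
    unfold Matr.beta
    rw [hDE, hDrk _ (Finset.Subset.refl _), hrE]
    congr 1
    refine Finset.sum_congr rfl fun A hA => ?_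
    rw [hDrk A (Finset.mem_powerset.mp hA)]
  have hC : C.beta = (-1 : ℤ) ^ m * ∑ A ∈ s.powerset, (-1 : ℤ) ^ A.card * (M.rk (insert i A) : ℤ) := by
    unfold Matr.beta
    rw [hCE]
    have hCs : C.rk s = m := by
      rw [hCrk _ (Finset.Subset.refl _), hr1, hEi]
      omega
    rw [hCs]
    congr 1
    calc ∑ A ∈ s.powerset, (-1 : ℤ) ^ A.card * (C.rk A : ℤ)
        = ∑ A ∈ s.powerset, ((-1 : ℤ) ^ A.card * (M.rk (insert i A) : ℤ) - (-1 : ℤ) ^ A.card) := by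
          refine Finset.sum_congr rfl fun A hA => ?_
          rw [hrkins A hA]; ring
      _ = ∑ A ∈ s.powerset, (-1 : ℤ) ^ A.card * (M.rk (insert i A) : ℤ)
            - ∑ A ∈ s.powerset, (-1 : ℤ) ^ A.card := Finset.sum_sub_distrib _ _
      _ = _ := by rw [hzero, sub_zero]
  have hM : M.beta = (-1 : ℤ) ^ (M.rk M.E) *
      (∑ A ∈ s.powerset, (-1 : ℤ) ^ A.card * (M.rk A : ℤ)
        - ∑ A ∈ s.powerset, (-1 : ℤ) ^ A.card * (M.rk (insert i A) : ℤ)) := by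
    unfold Matr.beta
    congr 1
    rw [← hEi, Finset.sum_powerset_insert his]
    have : ∑ A ∈ s.powerset, (-1 : ℤ) ^ (insert i A).card * (M.rk (insert i A) : ℤ)
        = - ∑ A ∈ s.powerset, (-1 : ℤ) ^ A.card * (M.rk (insert i A) : ℤ) := by
      rw [← Finset.sum_neg_distrib]
      refine Finset.sum_congr rfl fun A hA => ?_
      have hiA : i ∉ A := fun h => his (Finset.mem_powerset.mp hA h)
      rw [Finset.card_insert_of_notMem hiA]
      ring
    rw [this]
    ring
  rw [hM, hD, hC, hm]
  ring
end

section
/- If a matroid M on a ground set with at least 2 elements is disconnected (i.e., it is a direct sum of two matroids on nonempty ground sets), then its beta invariant β(M) vanishes. -/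
open Finset Pointwise

/-- **β vanishes on disconnected matroids.** If a matroid on at least two elements is
disconnected, then its beta invariant is zero. -/
theorem beta_eq_zero_of_disconnected {α : Type} [DecidableEq α]
    (M : Matr α) (hcard : 2 ≤ M.E.card) (hdisc : M.IsDisconnected) :
    M.beta = 0 := by
  obtain ⟨E₁, E₂, hU, hdisj, h1, h2, hadd⟩ := hdisc
  have e1 : ∑ Q ∈ E₁.powerset, ((-1 : ℤ)) ^ Q.card = 0 :=
    Finset.sum_powerset_neg_one_pow_card_of_nonempty h1
  have e2 : ∑ Q ∈ E₂.powerset, ((-1 : ℤ)) ^ Q.card = 0 :=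
    Finset.sum_powerset_neg_one_pow_card_of_nonempty h2
  have key : ∑ A ∈ M.E.powerset, (-1 : ℤ) ^ A.card * (M.rk A : ℤ) = 0 := by
    have step : ∑ A ∈ M.E.powerset, (-1 : ℤ) ^ A.card * (M.rk A : ℤ)
        = ∑ pq ∈ E₁.powerset ×ˢ E₂.powerset,
            (-1 : ℤ) ^ (pq.1.card + pq.2.card) * ((M.rk pq.1 : ℤ) + (M.rk pq.2 : ℤ)) := by
      refine Finset.sum_nbij' (fun A => (A ∩ E₁, A ∩ E₂)) (fun pq => pq.1 ∪ pq.2)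
        ?_ ?_ ?_ ?_ ?_
      · intro A hA
        simp [Finset.mem_product, Finset.inter_subset_right]
      · intro pq hpq
        rw [Finset.mem_product, Finset.mem_powerset, Finset.mem_powerset] at hpq
        rw [Finset.mem_powerset, ← hU]
        exact Finset.union_subset_union hpq.1 hpq.2
      · intro A hA
        rw [Finset.mem_powerset, ← hU] at hA
        simp only [← Finset.inter_union_distrib_left]
        exact Finset.inter_eq_left.2 hA
      · intro pq hpq
        rw [Finset.mem_product, Finset.mem_powerset, Finset.mem_powerset] at hpq
        have hp1 : (pq.1 ∪ pq.2) ∩ E₁ = pq.1 := by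
          ext a
          simp only [Finset.mem_inter, Finset.mem_union]
          constructor
          · rintro ⟨h | h, hE⟩
            · exact h
            · exact absurd hE (Finset.disjoint_right.1 hdisj (hpq.2 h))
          · intro h; exact ⟨Or.inl h, hpq.1 h⟩
        have hp2 : (pq.1 ∪ pq.2) ∩ E₂ = pq.2 := by
          ext a
          simp only [Finset.mem_inter, Finset.mem_union]
          constructor
          · rintro ⟨h | h, hE⟩
            · exact absurd hE (Finset.disjoint_left.1 hdisj (hpq.1 h))
            · exact h
          · intro h; exact ⟨Or.inr h, hpq.2 h⟩
        ext <;> simp [hp1, hp2]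
      · intro A hA
        rw [Finset.mem_powerset] at hA
        have hrk := hadd A hA
        have hcardA : A.card = (A ∩ E₁).card + (A ∩ E₂).card := by
          rw [← Finset.card_union_of_disjoint
            (Finset.disjoint_of_subset_left Finset.inter_subset_right
              (Finset.disjoint_of_subset_right Finset.inter_subset_right hdisj)),
            ← Finset.inter_union_distrib_left, hU, Finset.inter_eq_left.2 hA]
        rw [hrk, hcardA]
        push_cast
        ring
    rw [step, Finset.sum_product]
    have inner : ∀ P : Finset α, ∑ Q ∈ E₂.powerset,
        (-1 : ℤ) ^ (P.card + Q.card) * ((M.rk P : ℤ) + (M.rk Q : ℤ))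
        = (-1 : ℤ) ^ P.card * ∑ Q ∈ E₂.powerset, (-1 : ℤ) ^ Q.card * (M.rk Q : ℤ) := by
      intro P
      have expand : ∀ Q : Finset α, (-1 : ℤ) ^ (P.card + Q.card) * ((M.rk P : ℤ) + (M.rk Q : ℤ))
          = (-1 : ℤ) ^ P.card * ((M.rk P : ℤ) * (-1 : ℤ) ^ Q.card)
            + (-1 : ℤ) ^ P.card * ((-1 : ℤ) ^ Q.card * (M.rk Q : ℤ)) := by
        intro Q; rw [pow_add]; ring
      rw [Finset.sum_congr rfl (fun Q _ => expand Q), Finset.sum_add_distrib]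
      have z : ∑ Q ∈ E₂.powerset, (-1 : ℤ) ^ P.card * ((M.rk P : ℤ) * (-1 : ℤ) ^ Q.card) = 0 := by
        rw [← Finset.mul_sum, ← Finset.mul_sum, e2]; ring
      rw [z, zero_add, ← Finset.mul_sum]
    rw [Finset.sum_congr rfl (fun P _ => inner P), ← Finset.sum_mul, e1, zero_mul]
  unfold Matr.beta
  rw [key, mul_zero]
end

section
/- The beta invariant of the uniform matroid U_{k,n} with 1 ≤ k ≤ n-1 equals the binomial coefficient binom(n-2, k-1). -/
open Finset Pointwise

lemma partial_alt_sum (n : ℕ) : ∀ i : ℕ,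
    ∑ j ∈ range (i + 1), (-1 : ℤ) ^ j * (n + 1).choose j = (-1) ^ i * n.choose i := by
  intro i
  induction i with
  | zero => simp
  | succ i ih =>
    rw [Finset.sum_range_succ, ih, Nat.choose_succ_succ]
    push_cast
    ring

lemma min_as_sum (j k : ℕ) :
    ((min j k : ℕ) : ℤ) = ∑ i ∈ range k, (if i < j then (1 : ℤ) else 0) := by
  rw [← Finset.sum_filter]
  have : (range k).filter (fun i => i < j) = range (min k j) := by
    ext i; simp [Nat.lt_min, and_comm]
  rw [this]
  simp [min_comm]

lemma key_sum (n k : ℕ) (hk : 1 ≤ k) (hkn : k ≤ n - 1) :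
    ∑ j ∈ range (n + 1), (-1 : ℤ) ^ j * n.choose j * min j k
      = (-1) ^ k * (n - 2).choose (k - 1) := by
  have hn2 : 2 ≤ n := by omega
  have inner : ∀ i < n, ∑ j ∈ range (n + 1),
      (-1 : ℤ) ^ j * n.choose j * (if i < j then (1 : ℤ) else 0)
      = -((-1) ^ i * (n - 1).choose i) := by
    intro i hi
    have h1 : ∀ j, (-1 : ℤ) ^ j * n.choose j * (if i < j then (1 : ℤ) else 0)
        = if i < j then (-1 : ℤ) ^ j * n.choose j else 0 := by
      intro j; split <;> simp
    simp only [h1]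
    rw [← Finset.sum_filter]
    have h2 : (range (n + 1)).filter (fun j => i < j) = Ico (i + 1) (n + 1) := by
      ext j; simp [Nat.lt_succ_iff]; omega
    rw [h2, Finset.sum_Ico_eq_sub _ (by omega)]
    have h3 : ∑ j ∈ range (n + 1), (-1 : ℤ) ^ j * n.choose j = 0 := by
      simpa using Int.alternating_sum_range_choose_of_ne (n := n) (by omega)
    have h4 : ∑ j ∈ range (i + 1), (-1 : ℤ) ^ j * n.choose j
        = (-1) ^ i * (n - 1).choose i := by
      have := partial_alt_sum (n - 1) i
      rwa [Nat.sub_add_cancel (by omega)] at this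
    rw [h3, h4]; ring
  calc ∑ j ∈ range (n + 1), (-1 : ℤ) ^ j * n.choose j * min j k
      = ∑ j ∈ range (n + 1), ∑ i ∈ range k,
          (-1 : ℤ) ^ j * n.choose j * (if i < j then (1 : ℤ) else 0) := by
        refine Finset.sum_congr rfl fun j _ => ?_
        rw [← Finset.mul_sum, ← min_as_sum]
    _ = ∑ i ∈ range k, ∑ j ∈ range (n + 1),
          (-1 : ℤ) ^ j * n.choose j * (if i < j then (1 : ℤ) else 0) :=
        Finset.sum_comm
    _ = ∑ i ∈ range k, -((-1 : ℤ) ^ i * (n - 1).choose i) := by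
        refine Finset.sum_congr rfl fun i hi => ?_
        exact inner i (by simp at hi; omega)
    _ = -∑ i ∈ range k, (-1 : ℤ) ^ i * (n - 1).choose i := by rw [Finset.sum_neg_distrib]
    _ = (-1) ^ k * (n - 2).choose (k - 1) := by
        have h5 := partial_alt_sum (n - 2) (k - 1)
        rw [Nat.sub_add_cancel hk] at h5
        have h6 : ∑ i ∈ range k, (-1 : ℤ) ^ i * ((n - 1).choose i)
            = (-1) ^ (k - 1) * (n - 2).choose (k - 1) := by
          rw [show n - 2 + 1 = n - 1 from by omega] at h5; exact h5
        rw [h6]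
        have : (-1 : ℤ) ^ k = -(-1) ^ (k - 1) := by
          have : k = (k - 1) + 1 := by omega
          rw [this]; ring_nf; simp
        rw [this]; ring

/-- **β of uniform matroids.** The beta invariant of `U_{k,n}` with `1 ≤ k ≤ n-1`
equals `C(n-2, k-1)`. -/
theorem beta_uniform (n k : ℕ) (hk : 1 ≤ k) (hkn : k ≤ n - 1)
    (M : Matr (Fin n)) (hE : M.E = Finset.univ)
    (hrk : ∀ A : Finset (Fin n), M.rk A = min A.card k) :
    M.beta = Nat.choose (n - 2) (k - 1) := by
  have hn2 : 2 ≤ n := by omega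
  have hcard : (Finset.univ : Finset (Fin n)).card = n := by simp
  have hrkE : M.rk M.E = k := by
    rw [hE, hrk, hcard]; omega
  have hsum : ∑ A ∈ M.E.powerset, (-1 : ℤ) ^ A.card * (M.rk A : ℤ)
      = ∑ j ∈ range (n + 1), (-1 : ℤ) ^ j * n.choose j * min j k := by
    rw [hE, Finset.sum_powerset, hcard]
    refine Finset.sum_congr rfl fun j hj => ?_
    have : ∀ A ∈ Finset.powersetCard j (Finset.univ : Finset (Fin n)),
        (-1 : ℤ) ^ A.card * (M.rk A : ℤ) = (-1) ^ j * min j k := by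
      intro A hA
      have hAc : A.card = j := (Finset.mem_powersetCard.mp hA).2
      rw [hrk, hAc]
    rw [Finset.sum_congr rfl this, Finset.sum_const, Finset.card_powersetCard, hcard,
      nsmul_eq_mul]
    push_cast
    ring
  unfold Matr.beta
  rw [hrkE, hsum, key_sum n k hk hkn]
  rw [← mul_assoc, ← mul_pow]
  simp
end

section
/- The beta invariant of any matroid is a nonnegative integer. -/
open Finset Pointwise

namespace Matr

variable {α : Type} [DecidableEq α]

/-- inner sum -/
def S (M : Matr α) : ℤ := ∑ A ∈ M.E.powerset, (-1) ^ A.card * (M.rk A : ℤ)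

/-- deletion -/
def del (M : Matr α) (e : α) : Matr α where
  E := M.E.erase e
  rk A := M.rk (A ∩ (M.E.erase e))
  rk_inter A := by beta_reduce; rw [inter_assoc, inter_self]
  rk_empty := by beta_reduce; rw [empty_inter, M.rk_empty]
  rk_le_card A hA := by
    beta_reduce
    rw [inter_eq_left.mpr hA]
    exact M.rk_le_card A (hA.trans (erase_subset e M.E))
  rk_mono A B h := M.rk_mono (inter_subset_inter_right h)
  rk_submod A B := by
    beta_reduce
    rw [union_inter_distrib_right, inter_inter_distrib_right]
    exact M.rk_submod _ _

lemma insert_inter_insert' (e : α) (s t : Finset α) :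
    insert e s ∩ insert e t = insert e (s ∩ t) := by
  ext x; simp [mem_insert, mem_inter]; tauto

/-- contraction -/
def con (M : Matr α) (e : α) : Matr α where
  E := M.E.erase e
  rk A := M.rk (insert e (A ∩ (M.E.erase e))) - M.rk {e}
  rk_inter A := by beta_reduce; rw [inter_assoc, inter_self]
  rk_empty := by beta_reduce; rw [empty_inter, LawfulSingleton.insert_empty_eq, Nat.sub_self]
  rk_le_card A hA := by
    beta_reduce
    rw [inter_eq_left.mpr hA]
    have heA : e ∉ A := fun h => notMem_erase e M.E (hA h)
    have h1 : M.rk (insert e A) + M.rk (A ∩ {e}) ≤ M.rk A + M.rk {e} := by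
      have := M.rk_submod A {e}
      rwa [union_comm, ← insert_eq] at this
    have h2 : M.rk A ≤ A.card := M.rk_le_card A (hA.trans (erase_subset e M.E))
    omega
  rk_mono A B h :=
    Nat.sub_le_sub_right (M.rk_mono (insert_subset_insert e (inter_subset_inter_right h))) _
  rk_submod A B := by
    beta_reduce
    set E' := M.E.erase e
    have key := M.rk_submod (insert e (A ∩ E')) (insert e (B ∩ E'))
    rw [insert_union, union_insert, insert_idem, insert_inter_insert',
      ← union_inter_distrib_right, ← inter_inter_distrib_right] at key
    have h1 : M.rk {e} ≤ M.rk (insert e ((A ∪ B) ∩ E')) :=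
      M.rk_mono (by simp)
    have h2 : M.rk {e} ≤ M.rk (insert e ((A ∩ B) ∩ E')) :=
      M.rk_mono (by simp)
    have h3 : M.rk {e} ≤ M.rk (insert e (A ∩ E')) := M.rk_mono (by simp)
    have h4 : M.rk {e} ≤ M.rk (insert e (B ∩ E')) := M.rk_mono (by simp)
    omega

lemma S_split (M : Matr α) {e : α} (he : e ∈ M.E) :
    M.S = ∑ A ∈ (M.E.erase e).powerset,
      (-1) ^ A.card * ((M.rk A : ℤ) - (M.rk (insert e A) : ℤ)) := by
  unfold S
  conv_lhs => rw [← Finset.insert_erase he]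
  rw [Finset.sum_powerset_insert (notMem_erase e M.E), ← Finset.sum_add_distrib]
  apply Finset.sum_congr rfl
  intro A hA
  have heA : e ∉ A := fun h => notMem_erase e M.E (mem_powerset.mp hA h)
  rw [card_insert_of_notMem heA, pow_succ]
  ring

end Matr

/-- **Nonnegativity of the beta invariant.** -/
theorem beta_nonneg {α : Type} [DecidableEq α] (M : Matr α) : 0 ≤ M.beta := by
  generalize hn : M.E.card = n
  induction n using Nat.strong_induction_on generalizing M with
  | _ n ih =>
  rcases eq_or_ne M.E ∅ with hE | hE
  · simp [Matr.beta, hE, M.rk_empty]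
  obtain ⟨e, he⟩ := Finset.nonempty_iff_ne_empty.mpr hE
  have hsplit := M.S_split he
  have hsub : ∀ A ∈ (M.E.erase e).powerset, A ⊆ M.E.erase e := fun A hA => mem_powerset.mp hA
  have hre : M.rk {e} ≤ 1 := le_trans (M.rk_le_card {e} (by simpa using he)) (by simp)
  have hcard : (M.E.erase e).card < n := by
    rw [← hn]; exact Finset.card_erase_lt_of_mem he
  -- rank of insert vs rank
  have hub : ∀ A ∈ (M.E.erase e).powerset, M.rk (insert e A) ≤ M.rk A + M.rk {e} := by
    intro A hA
    have heA : e ∉ A := fun h => notMem_erase e M.E (hsub A hA h)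
    have := M.rk_submod A {e}
    rw [union_comm, ← insert_eq] at this
    omega
  rcases Nat.eq_zero_or_pos (M.rk {e}) with hloop | hnl
  · -- loop: every term vanishes
    have : M.S = 0 := by
      rw [hsplit]
      apply Finset.sum_eq_zero
      intro A hA
      have h1 := hub A hA
      have h2 : M.rk A ≤ M.rk (insert e A) := M.rk_mono (Finset.subset_insert e A)
      have : M.rk (insert e A) = M.rk A := by omega
      rw [this]; ring
    unfold Matr.beta; rw [show (∑ A ∈ M.E.powerset, (-1:ℤ) ^ A.card * (M.rk A : ℤ)) = M.S from rfl, this, mul_zero]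
  have hre1 : M.rk {e} = 1 := le_antisymm hre hnl
  have hEe : M.E.erase e ∪ {e} = M.E := by
    rw [union_comm, ← insert_eq, Finset.insert_erase he]
  rcases lt_or_eq_of_le (M.rk_mono (Finset.erase_subset e M.E)) with hco | hrk
  · -- coloop: rk (insert e A) = rk A + 1 for A ⊆ E'
    have hstep : ∀ A ∈ (M.E.erase e).powerset, M.rk (insert e A) = M.rk A + 1 := by
      intro A hA
      have hub' := hub A hA
      have heA : e ∉ A := fun h => notMem_erase e M.E (hsub A hA h)
      have key := M.rk_submod (insert e A) (M.E.erase e)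
      have hAe : insert e A ∪ M.E.erase e = M.E := by
        rw [insert_union, Finset.union_eq_right.mpr (hsub A hA), Finset.insert_erase he]
      have hAi : insert e A ∩ M.E.erase e = A := by
        rw [insert_inter_of_notMem (notMem_erase e M.E),
          inter_eq_left.mpr (hsub A hA)]
      rw [hAe, hAi] at key
      -- rk E ≤ rk(insert e A) + rk E' - rk A, and rk E' < rk E
      have hEle : M.rk M.E ≤ M.rk (M.E.erase e) + 1 := by
        have := M.rk_submod (M.E.erase e) {e}
        rw [hEe] at this
        omega
      omega
    have hS : M.S = -∑ A ∈ (M.E.erase e).powerset, (-1) ^ A.card := by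
      rw [hsplit, ← Finset.sum_neg_distrib]
      apply Finset.sum_congr rfl
      intro A hA
      rw [hstep A hA]
      push_cast; ring
    rw [Finset.sum_powerset_neg_one_pow_card] at hS
    unfold Matr.beta
    rw [show (∑ A ∈ M.E.powerset, (-1:ℤ) ^ A.card * (M.rk A : ℤ)) = M.S from rfl]
    by_cases hE' : M.E.erase e = ∅
    · rw [hS, if_pos hE']
      have hEs : M.E = {e} := by
        rw [← Finset.insert_erase he, hE']; rfl
      rw [hEs, show M.rk {e} = 1 from hre1]
      norm_num
    · rw [hS, if_neg hE', neg_zero, mul_zero]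
  · -- main case: rk E' = rk E, β M = β (del) + β (con)
    have hrkE : 1 ≤ M.rk M.E := hnl.trans_le (M.rk_mono (by simpa using he))
    have hE'ne : M.E.erase e ≠ ∅ := by
      intro h
      have : M.rk (M.E.erase e) = 0 := by rw [h, M.rk_empty]
      omega
    -- ranks of minors on A ⊆ E'
    have hdelrk : ∀ A ∈ (M.E.erase e).powerset, ((M.del e).rk A : ℤ) = M.rk A := by
      intro A hA
      simp [Matr.del, inter_eq_left.mpr (hsub A hA)]
    have hconrk : ∀ A ∈ (M.E.erase e).powerset,
        ((M.con e).rk A : ℤ) = (M.rk (insert e A) : ℤ) - 1 := by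
      intro A hA
      have h1 : M.rk {e} ≤ M.rk (insert e A) := M.rk_mono (by simp)
      simp only [Matr.con, inter_eq_left.mpr (hsub A hA)]
      rw [Nat.cast_sub (by omega), hre1]
      norm_num
    have hSrec : M.S = (M.del e).S - (M.con e).S := by
      have hdelE : (M.del e).E = M.E.erase e := rfl
      have hconE : (M.con e).E = M.E.erase e := rfl
      rw [hsplit]
      unfold Matr.S
      rw [hdelE, hconE, ← Finset.sum_sub_distrib]
      have : ∑ A ∈ (M.E.erase e).powerset,
          ((-1:ℤ) ^ A.card * ((M.del e).rk A : ℤ) - (-1) ^ A.card * ((M.con e).rk A : ℤ))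
          = ∑ A ∈ (M.E.erase e).powerset,
            ((-1:ℤ) ^ A.card * ((M.rk A : ℤ) - (M.rk (insert e A) : ℤ)) + (-1) ^ A.card) := by
        apply Finset.sum_congr rfl
        intro A hA
        rw [hdelrk A hA, hconrk A hA]; ring
      rw [this, Finset.sum_add_distrib,
        Finset.sum_powerset_neg_one_pow_card, if_neg hE'ne, add_zero]
    -- ranks of ground sets of minors
    have hdelES : (M.del e).rk (M.del e).E = M.rk M.E := by
      show M.rk (M.E.erase e ∩ M.E.erase e) = M.rk M.E
      rw [inter_self, hrk]
    have hconES : (M.con e).rk (M.con e).E = M.rk M.E - 1 := by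
      show M.rk (insert e (M.E.erase e ∩ M.E.erase e)) - M.rk {e} = M.rk M.E - 1
      rw [inter_self, Finset.insert_erase he, hre1]
    have hdcard : (M.del e).E.card = (M.E.erase e).card := rfl
    have hccard : (M.con e).E.card = (M.E.erase e).card := rfl
    have ihd := ih _ hcard (M.del e) hdcard
    have ihc := ih _ hcard (M.con e) hccard
    unfold Matr.beta at ihd ihc ⊢
    rw [show (∑ A ∈ M.E.powerset, (-1:ℤ) ^ A.card * (M.rk A : ℤ)) = M.S from rfl, hSrec]
    rw [show (∑ A ∈ (M.del e).E.powerset, (-1:ℤ) ^ A.card * ((M.del e).rk A : ℤ)) = (M.del e).S from rfl, hdelES] at ihd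
    rw [show (∑ A ∈ (M.con e).E.powerset, (-1:ℤ) ^ A.card * ((M.con e).rk A : ℤ)) = (M.con e).S from rfl, hconES] at ihc
    have hpow : (-1:ℤ) ^ M.rk M.E = -(-1) ^ (M.rk M.E - 1) := by
      conv_lhs => rw [show M.rk M.E = (M.rk M.E - 1) + 1 from by omega]
      rw [pow_succ]; ring
    rw [mul_sub, hpow]
    have : -(-1:ℤ) ^ (M.rk M.E - 1) * (M.del e).S - -(-1) ^ (M.rk M.E - 1) * (M.con e).S
        = (-(-1) ^ (M.rk M.E - 1)) * (M.del e).S + (-1) ^ (M.rk M.E - 1) * (M.con e).S := by ring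
    rw [this, ← hpow]
    exact add_nonneg ihd ihc
end

section
/- Fix integers 0 ≤ k ≤ n and two lattice paths L, U from (0,0) to (n-k,k) with unit north and east steps, encoded by the sets s(L), s(U) ⊆ {1,…,n} of positions of north steps, such that |s(L) ∩ [m]| ≤ |s(U) ∩ [m]| for all m. Then the collection { s(P) : P a lattice path with L ≤ P ≤ U } is the set of bases of a matroid of rank k on {1,…,n}. -/
open Finset Pointwise

/-- `pathCount S m = |S ∩ [m]|`, the number of north steps of the path encoded by `S`
among the first `m` steps. -/
def pathCount {n : ℕ} (S : Finset (Fin n)) (m : ℕ) : ℕ :=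
  (S.filter (fun i : Fin n => (i : ℕ) < m)).card

section LPMaux

variable {n : ℕ}

lemma pathCount_succ (S : Finset (Fin n)) (m : ℕ) :
    pathCount S (m + 1) = pathCount S m + (S.filter (fun i : Fin n => (i : ℕ) = m)).card := by
  rw [pathCount, pathCount, ← Finset.card_union_of_disjoint]
  · congr 1
    ext i
    simp only [Finset.mem_filter, Finset.mem_union]
    have : ((i : ℕ) < m + 1) ↔ ((i : ℕ) < m ∨ (i : ℕ) = m) := by omega
    tauto
  · rw [Finset.disjoint_left]
    intro a ha hb
    simp only [Finset.mem_filter] at ha hb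
    omega

lemma stepset_card_le (S : Finset (Fin n)) (m : ℕ) :
    (S.filter (fun i : Fin n => (i : ℕ) = m)).card ≤ 1 := by
  apply Finset.card_le_one.mpr
  intro a ha b hb
  simp only [Finset.mem_filter] at ha hb
  exact Fin.ext (by omega)

lemma pathCount_mono (S : Finset (Fin n)) {m m' : ℕ} (h : m ≤ m') :
    pathCount S m ≤ pathCount S m' := by
  apply Finset.card_le_card
  intro i hi
  simp only [Finset.mem_filter] at hi ⊢
  exact ⟨hi.1, by omega⟩

lemma pathCount_succ_le (S : Finset (Fin n)) (m : ℕ) :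
    pathCount S (m + 1) ≤ pathCount S m + 1 := by
  have := stepset_card_le S m
  rw [pathCount_succ]; omega

lemma pathCount_step_of_mem {S : Finset (Fin n)} {y : Fin n} {m : ℕ}
    (hy : y ∈ S) (hym : (y : ℕ) = m) :
    pathCount S (m + 1) = pathCount S m + 1 := by
  rw [pathCount_succ]
  have h1 : 0 < (S.filter (fun i : Fin n => (i : ℕ) = m)).card :=
    Finset.card_pos.mpr ⟨y, Finset.mem_filter.mpr ⟨hy, hym⟩⟩
  have := stepset_card_le S m
  omega

lemma exists_mem_of_step {S : Finset (Fin n)} {m : ℕ}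
    (h : pathCount S m < pathCount S (m + 1)) : ∃ y ∈ S, (y : ℕ) = m := by
  rw [pathCount_succ] at h
  have : 0 < (S.filter (fun i : Fin n => (i : ℕ) = m)).card := by omega
  obtain ⟨y, hy⟩ := Finset.card_pos.mp this
  simp only [Finset.mem_filter] at hy
  exact ⟨y, hy.1, hy.2⟩

lemma pathCount_of_ge (S : Finset (Fin n)) {m : ℕ} (h : n ≤ m) :
    pathCount S m = S.card := by
  rw [pathCount, Finset.filter_true_of_mem]
  intro i _
  exact lt_of_lt_of_le i.isLt h

lemma pathCount_zero (S : Finset (Fin n)) : pathCount S 0 = 0 := by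
  simp [pathCount]

lemma pathCount_insert {S : Finset (Fin n)} {y : Fin n} (h : y ∉ S) (m : ℕ) :
    pathCount (insert y S) m = pathCount S m + if (y : ℕ) < m then 1 else 0 := by
  rw [pathCount, pathCount, Finset.filter_insert]
  split_ifs with hc
  · rw [Finset.card_insert_of_notMem (fun hmem => h (Finset.mem_of_mem_filter _ hmem))]
  · rfl

/-- Bases of the lattice path matroid. -/
def isLPB (k : ℕ) (SL SU : Finset (Fin n)) (B : Finset (Fin n)) : Prop :=
  B.card = k ∧ ∀ m, pathCount SL m ≤ pathCount B m ∧ pathCount B m ≤ pathCount SU m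

lemma lpb_exchange {k : ℕ} {SL SU B1 B2 : Finset (Fin n)}
    (h1 : isLPB k SL SU B1) (h2 : isLPB k SL SU B2) {x : Fin n}
    (hx1 : x ∈ B1) (hx2 : x ∉ B2) :
    ∃ y ∈ B2, y ∉ B1 ∧ isLPB k SL SU (insert y (B1.erase x)) := by
  have hb1x : pathCount B1 ((x : ℕ) + 1) = pathCount B1 (x : ℕ) + 1 :=
    pathCount_step_of_mem hx1 rfl
  have hb2x : pathCount B2 ((x : ℕ) + 1) = pathCount B2 (x : ℕ) := by
    refine le_antisymm ?_ (pathCount_mono _ (Nat.le_succ _))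
    by_contra hcon
    push_neg at hcon
    obtain ⟨y, hyB2, hyv⟩ := exists_mem_of_step hcon
    exact hx2 (by rwa [show y = x from Fin.ext hyv] at hyB2)
  have hend : pathCount B1 n = pathCount B2 n := by
    rw [pathCount_of_ge _ le_rfl, pathCount_of_ge _ le_rfl, h1.1, h2.1]
  -- helper to conclude once we have found a suitable `y`
  have main : ∀ y : Fin n, y ∈ B2 → y ∉ B1 →
      (∀ m, pathCount SL m ≤ pathCount (B1.erase x) m + (if (y:ℕ) < m then 1 else 0) ∧
        pathCount (B1.erase x) m + (if (y:ℕ) < m then 1 else 0) ≤ pathCount SU m) →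
      ∃ y ∈ B2, y ∉ B1 ∧ isLPB k SL SU (insert y (B1.erase x)) := by
    intro y hyB2 hyB1 hbound
    have hyE : y ∉ B1.erase x := fun h => hyB1 (Finset.mem_of_mem_erase h)
    have hc := h1.1
    have hkpos : 0 < B1.card := Finset.card_pos.mpr ⟨x, hx1⟩
    refine ⟨y, hyB2, hyB1, ?_, ?_⟩
    · rw [Finset.card_insert_of_notMem hyE, Finset.card_erase_of_mem hx1]
      omega
    · intro m
      rw [pathCount_insert hyE]
      exact hbound m
  have herase : ∀ m, pathCount B1 m
      = pathCount (B1.erase x) m + (if (x:ℕ) < m then 1 else 0) := by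
    intro m
    conv_lhs => rw [← Finset.insert_erase hx1]
    exact pathCount_insert (Finset.notMem_erase x B1) m
  rcases Nat.lt_or_ge (pathCount B1 (x : ℕ)) (pathCount B2 (x : ℕ)) with hcase | hcase
  · -- Case B : go left
    have hTne : (Finset.filter (fun m => pathCount B2 m ≤ pathCount B1 m)
        (Finset.range ((x : ℕ) + 1))).Nonempty :=
      ⟨0, Finset.mem_filter.mpr ⟨Finset.mem_range.mpr (by omega),
        by rw [pathCount_zero, pathCount_zero]⟩⟩
    obtain ⟨p, hpT, hpmax⟩ := Finset.exists_max_image _ id hTne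
    have hp1 : p < (x : ℕ) + 1 := Finset.mem_range.mp (Finset.mem_filter.mp hpT).1
    have hp2 : pathCount B2 p ≤ pathCount B1 p := (Finset.mem_filter.mp hpT).2
    have hnot : ∀ m, p < m → m ≤ (x : ℕ) → pathCount B1 m < pathCount B2 m := by
      intro m hpm hmx
      by_contra hcon
      push_neg at hcon
      have hmT := hpmax m
        (Finset.mem_filter.mpr ⟨Finset.mem_range.mpr (by omega), hcon⟩)
      simp only [id] at hmT
      omega
    have hpx : p < (x : ℕ) := by
      rcases Nat.lt_or_ge p (x : ℕ) with h | h
      · exact h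
      · exfalso
        have hpe : p = (x : ℕ) := by omega
        rw [hpe] at hp2; omega
    have hstep1 : pathCount B1 (p + 1) < pathCount B2 (p + 1) :=
      hnot (p + 1) (by omega) (by omega)
    have hmono1 : pathCount B1 p ≤ pathCount B1 (p + 1) := pathCount_mono _ (by omega)
    have hsucc2 : pathCount B2 (p + 1) ≤ pathCount B2 p + 1 := pathCount_succ_le _ _
    have hstep2 : pathCount B2 p < pathCount B2 (p + 1) := by omega
    have hb1flat : pathCount B1 (p + 1) = pathCount B1 p := by omega
    obtain ⟨y, hyB2, hyv⟩ := exists_mem_of_step hstep2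
    have hyB1 : y ∉ B1 := by
      intro hy
      have := pathCount_step_of_mem hy hyv
      omega
    apply main y hyB2 hyB1
    intro m
    have e1 := herase m
    have hlo := (h1.2 m).1
    have hhi := (h1.2 m).2
    have hlo2 := (h2.2 m).1
    have hhi2 := (h2.2 m).2
    by_cases hym : (y : ℕ) < m
    · rw [if_pos hym]
      by_cases hxm : (x : ℕ) < m
      · rw [if_pos hxm] at e1; omega
      · have hmid := hnot m (by omega) (by omega)
        rw [if_neg hxm] at e1; omega
    · rw [if_neg hym]
      have hxm : ¬ (x : ℕ) < m := by omega
      rw [if_neg hxm] at e1; omega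
  · -- Case A : go right
    have hTne : (Finset.filter
        (fun m => (x : ℕ) < m ∧ pathCount B1 m ≤ pathCount B2 m)
        (Finset.range (n + 1))).Nonempty :=
      ⟨n, Finset.mem_filter.mpr ⟨Finset.mem_range.mpr (by omega),
        x.isLt, le_of_eq hend⟩⟩
    obtain ⟨q, hqT, hqmin⟩ := Finset.exists_min_image _ id hTne
    have hq0 : q < n + 1 := Finset.mem_range.mp (Finset.mem_filter.mp hqT).1
    have hq1 : (x : ℕ) < q := (Finset.mem_filter.mp hqT).2.1
    have hq2 : pathCount B1 q ≤ pathCount B2 q := (Finset.mem_filter.mp hqT).2.2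
    have hnot : ∀ m, (x : ℕ) < m → m < q → pathCount B2 m < pathCount B1 m := by
      intro m hxm hmq
      by_contra hcon
      push_neg at hcon
      have hmT := hqmin m (Finset.mem_filter.mpr
        ⟨Finset.mem_range.mpr (by omega), hxm, hcon⟩)
      simp only [id] at hmT
      omega
    have hqx : (x : ℕ) + 2 ≤ q := by
      have hne : q ≠ (x : ℕ) + 1 := by
        intro h
        rw [h] at hq2
        omega
      omega
    have hpq : (q - 1) + 1 = q := by omega
    have hb2p : pathCount B2 (q - 1) < pathCount B1 (q - 1) :=
      hnot (q - 1) (by omega) (by omega)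
    have hmono1 : pathCount B1 (q - 1) ≤ pathCount B1 ((q - 1) + 1) :=
      pathCount_mono _ (by omega)
    have hsucc2 : pathCount B2 ((q - 1) + 1) ≤ pathCount B2 (q - 1) + 1 :=
      pathCount_succ_le _ _
    have hqineq : pathCount B1 ((q-1)+1) ≤ pathCount B2 ((q-1)+1) := by
      rw [hpq]; exact hq2
    have hstep2 : pathCount B2 (q - 1) < pathCount B2 ((q - 1) + 1) := by omega
    have hb1flat : pathCount B1 ((q - 1) + 1) = pathCount B1 (q - 1) := by omega
    obtain ⟨y, hyB2, hyv⟩ := exists_mem_of_step hstep2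
    have hyB1 : y ∉ B1 := by
      intro hy
      have := pathCount_step_of_mem hy hyv
      omega
    apply main y hyB2 hyB1
    intro m
    have e1 := herase m
    have hlo := (h1.2 m).1
    have hhi := (h1.2 m).2
    have hlo2 := (h2.2 m).1
    have hhi2 := (h2.2 m).2
    by_cases hxm : (x : ℕ) < m
    · rw [if_pos hxm] at e1
      by_cases hym : (y : ℕ) < m
      · rw [if_pos hym]; omega
      · have hmid := hnot m (by omega) (by omega)
        rw [if_neg hym]; omega
    · have hym : ¬ (y : ℕ) < m := by omega
      rw [if_neg hym]
      rw [if_neg hxm] at e1; omega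

end LPMaux

/-- **Lattice-path matroids are matroids.** Given lattice paths `L ≤ U` from `(0,0)`
to `(n-k,k)` encoded by their north-step sets, the paths between them form the set
of bases of a rank-`k` matroid on `[n]`. -/
theorem latticePath_is_matroid (n k : ℕ) (SL SU : Finset (Fin n))
    (hL : SL.card = k) (hU : SU.card = k)
    (hdom : ∀ m : ℕ, pathCount SL m ≤ pathCount SU m) :
    ∃ M : Matr (Fin n), M.E = Finset.univ ∧ M.rk Finset.univ = k ∧
      ∀ B : Finset (Fin n), M.IsBase B ↔
        (B.card = k ∧ ∀ m : ℕ, pathCount SL m ≤ pathCount B m ∧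
          pathCount B m ≤ pathCount SU m) := by
    classical
  have hSL : isLPB k SL SU SL := ⟨hL, fun m => ⟨le_refl _, hdom m⟩⟩
  set Bse : Set (Fin n) → Prop :=
    fun X => ∃ B : Finset (Fin n), isLPB k SL SU B ∧ X = ↑B with hBse
  have hexch : Matroid.ExchangeProperty Bse := by
    rintro X Y ⟨B1, hB1, rfl⟩ ⟨B2, hB2, rfl⟩ a ha
    simp only [Set.mem_diff, Finset.mem_coe] at ha
    obtain ⟨y, hyB2, hyB1, hy⟩ := lpb_exchange hB1 hB2 ha.1 ha.2
    refine ⟨y, by simp [Set.mem_diff, hyB2, hyB1], insert y (B1.erase a), hy, ?_⟩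
    simp [Finset.coe_insert, Finset.coe_erase]
  set M : Matroid (Fin n) := Matroid.ofExistsFiniteIsBase Set.univ Bse
      ⟨↑SL, ⟨SL, hSL, rfl⟩, (SL : Set (Fin n)).toFinite⟩ hexch
      (fun B _ => Set.subset_univ B) with hM
  have hMBase : ∀ X, M.IsBase X ↔ Bse X := fun X => Iff.rfl
  have hME : M.E = Set.univ := rfl
  choose bs hbs using fun A : Finset (Fin n) => M.exists_isBasis' (↑A : Set (Fin n))
  have hrk_eq : ∀ (A : Finset (Fin n)) (I : Set (Fin n)),
      M.IsBasis' I ↑A → I.ncard = (bs A).ncard := by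
    intro A I hI
    have h := hI.encard_eq_encard (hbs A)
    rw [Set.ncard_def, Set.ncard_def, h]
  have hindep_le : ∀ (A : Finset (Fin n)) (I : Set (Fin n)), M.Indep I → I ⊆ ↑A →
      I.ncard ≤ (bs A).ncard := by
    intro A I hI hIA
    obtain ⟨J, hJ, hIJ⟩ := hI.subset_isBasis'_of_subset hIA
    rw [← hrk_eq A J hJ]
    exact Set.ncard_le_ncard hIJ J.toFinite
  have hbase_card : ∀ X, M.IsBase X → X.ncard = k := by
    rintro X ⟨B, hB, rfl⟩
    rw [Set.ncard_coe_finset, hB.1]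
  have hcoe : ((Finset.univ : Finset (Fin n)) : Set (Fin n)) = M.E := by
    rw [hME, Finset.coe_univ]
  have hunivbase : M.IsBase (bs Finset.univ) := by
    have h := hbs Finset.univ
    rw [hcoe, Matroid.isBasis'_iff_isBasis] at h
    exact Matroid.isBasis_ground_iff.mp h
  have hrkU : (bs Finset.univ).ncard = k := hbase_card _ hunivbase
  refine ⟨⟨Finset.univ, fun A => (bs A).ncard, ?_, ?_, ?_, ?_, ?_⟩, rfl, hrkU, ?_⟩
  · intro A
    rw [Finset.inter_univ]
  · have h := (hbs ∅).subset
    simp only [Finset.coe_empty, Set.subset_empty_iff] at h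
    show (bs ∅).ncard = 0
    rw [h, Set.ncard_empty]
  · intro A _
    have h := Set.ncard_le_ncard (hbs A).subset (Set.toFinite _)
    rwa [Set.ncard_coe_finset] at h
  · intro A B hAB
    exact hindep_le B _ (hbs A).indep ((hbs A).subset.trans (Finset.coe_subset.mpr hAB))
  · intro A B
    obtain ⟨J, hJ, hIJ⟩ := (hbs (A ∩ B)).indep.subset_isBasis'_of_subset
      ((hbs (A ∩ B)).subset.trans
        (Finset.coe_subset.mpr ((Finset.inter_subset_left).trans Finset.subset_union_left)))
    have hJA : (J ∩ ↑A).ncard ≤ (bs A).ncard :=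
      hindep_le A _ (hJ.indep.subset Set.inter_subset_left) Set.inter_subset_right
    have hJB : (J ∩ ↑B).ncard ≤ (bs B).ncard :=
      hindep_le B _ (hJ.indep.subset Set.inter_subset_left) Set.inter_subset_right
    have hIcap : (bs (A ∩ B)).ncard ≤ (J ∩ (↑A ∩ ↑B)).ncard := by
      apply Set.ncard_le_ncard _ (Set.toFinite _)
      refine Set.subset_inter hIJ ?_
      have h := (hbs (A ∩ B)).subset
      rwa [Finset.coe_inter] at h
    have hun : (J ∩ ↑A) ∪ (J ∩ ↑B) = J := by
      rw [← Set.inter_union_distrib_left]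
      apply Set.inter_eq_left.mpr
      have h := hJ.subset
      rwa [Finset.coe_union] at h
    have hin : (J ∩ ↑A) ∩ (J ∩ ↑B) = J ∩ (↑A ∩ ↑B) := by
      ext i
      simp only [Set.mem_inter_iff]
      tauto
    have hcnt := Set.ncard_union_add_ncard_inter (J ∩ ↑A) (J ∩ ↑B)
      (Set.toFinite _) (Set.toFinite _)
    rw [hun, hin] at hcnt
    have hJcard : J.ncard = (bs (A ∪ B)).ncard := hrk_eq _ _ hJ
    show (bs (A ∪ B)).ncard + (bs (A ∩ B)).ncard ≤ (bs A).ncard + (bs B).ncard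
    omega
  · intro B
    constructor
    · rintro ⟨hBE, hBcard, hBrk⟩
      have hBcard' : B.card = (bs Finset.univ).ncard := hBcard
      have hBrk' : (bs B).ncard = B.card := hBrk
      have hbsB : bs B = ↑B := by
        apply Set.eq_of_subset_of_ncard_le (hbs B).subset _ (Set.toFinite _)
        rw [Set.ncard_coe_finset]
        omega
      have hBindep : M.Indep ↑B := hbsB ▸ (hbs B).indep
      obtain ⟨C, hC, hBC⟩ := hBindep.exists_isBase_superset
      obtain ⟨B2, hB2, rfl⟩ := hC
      have hsub : B ⊆ B2 := Finset.coe_subset.mp hBC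
      obtain rfl : B = B2 := Finset.eq_of_subset_of_card_le hsub (by have h2c := hB2.1; omega)
      exact ⟨hB2.1, hB2.2⟩
    · rintro ⟨hc, hb⟩
      have hlpb : isLPB k SL SU B := ⟨hc, hb⟩
      have hBbase : M.IsBase ↑B := ⟨B, hlpb, rfl⟩
      refine ⟨Finset.subset_univ _, hc.trans hrkU.symm, ?_⟩
      have h1 := hindep_le B ↑B hBbase.indep (Set.Subset.refl _)
      rw [Set.ncard_coe_finset] at h1
      have h2 := Set.ncard_le_ncard (hbs B).subset (Set.toFinite _)
      rw [Set.ncard_coe_finset] at h2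
      show (bs B).ncard = B.card
      omega
end

section
/- Let P be a finite poset with n elements, and let Ω(P,t) denote its order polynomial. Then Ω(P, t+1) equals the Ehrhart polynomial of the order polytope O(P); that is, for every positive integer t, the number of lattice points in t·O(P) equals the number of order-preserving maps from P to {0,1,…,t}. -/
open Finset Pointwise

/-- The order polytope `O(P)` of a finite poset. -/
def orderPolytope (P : Type) [PartialOrder P] : Set (P → ℝ) :=
  {f | (∀ a, 0 ≤ f a ∧ f a ≤ 1) ∧ ∀ a b : P, a ≤ b → f a ≤ f b}

lemma mem_scaled_orderPolytope {P : Type} [PartialOrder P] (t : ℕ) (ht : 0 < t) (x : P → ℤ) :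
    (fun a => (x a : ℝ)) ∈ (t : ℝ) • orderPolytope P ↔
      (∀ a, 0 ≤ x a ∧ x a ≤ t) ∧ Monotone x := by
  have htR : (0 : ℝ) < t := by exact_mod_cast ht
  constructor
  · rintro ⟨f, ⟨hf1, hf2⟩, hfx⟩
    have hx : ∀ a, (x a : ℝ) = t * f a := by
      intro a
      have := congrFun hfx a
      simpa [Pi.smul_apply, smul_eq_mul] using this.symm
    refine ⟨fun a => ⟨?_, ?_⟩, ?_⟩
    · have : (0 : ℝ) ≤ x a := by
        rw [hx a]; exact mul_nonneg htR.le (hf1 a).1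
      exact_mod_cast this
    · have : (x a : ℝ) ≤ t := by
        rw [hx a]
        calc (t : ℝ) * f a ≤ t * 1 := mul_le_mul_of_nonneg_left (hf1 a).2 htR.le
          _ = t := mul_one _
      exact_mod_cast this
    · intro a b hab
      have : (x a : ℝ) ≤ x b := by
        rw [hx a, hx b]
        exact mul_le_mul_of_nonneg_left (hf2 a b hab) htR.le
      exact_mod_cast this
  · rintro ⟨hb, hm⟩
    refine ⟨fun a => (x a : ℝ) / t, ⟨fun a => ⟨?_, ?_⟩, ?_⟩, ?_⟩
    · apply div_nonneg _ htR.le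
      exact_mod_cast (hb a).1
    · rw [div_le_one htR]
      exact_mod_cast (hb a).2
    · intro a b hab
      have h : (x a : ℝ) ≤ x b := by exact_mod_cast hm hab
      exact div_le_div_of_nonneg_right h htR.le |>.trans_eq rfl
    · funext a
      simp only [Pi.smul_apply, smul_eq_mul]
      field_simp

/-- The equivalence between lattice points of `t·O(P)` and monotone maps to `Fin (t+1)`. -/
def latticeEquiv {P : Type} [PartialOrder P] (t : ℕ) :
    {x : P → ℤ // (∀ a, 0 ≤ x a ∧ x a ≤ t) ∧ Monotone x} ≃ (P →o Fin (t + 1)) where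
  toFun x := ⟨fun a => ⟨(x.1 a).toNat, by
      have := (x.2.1 a).2
      omega⟩, by
      intro a b hab
      have := x.2.2 hab
      simp only [Fin.mk_le_mk]
      omega⟩
  invFun g := ⟨fun a => ((g a : ℕ) : ℤ), by
      refine ⟨fun a => ⟨by positivity, ?_⟩, ?_⟩
      · show ((g a : ℕ) : ℤ) ≤ (t : ℤ)
        exact_mod_cast Nat.lt_succ_iff.mp (g a).isLt
      · intro a b hab
        exact Int.ofNat_le.2 (g.monotone hab)⟩
  left_inv x := by
    ext a
    show (((x.1 a).toNat : ℕ) : ℤ) = x.1 a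
    simp [Int.toNat_of_nonneg (x.2.1 a).1]
  right_inv g := by
    ext a
    simp

open Polynomial in
/-- **Stanley's theorem on order polytopes.** The Ehrhart polynomial of `O(P)` is
`Ω(P, t+1)`: for every positive integer `t`, the lattice points of `t·O(P)` are
counted by the order-preserving maps `P → {0,1,…,t}`.  Moreover, if `p` is the
order polynomial of `P` and `q` the Ehrhart polynomial of `O(P)`, then
`q(t) = p(t+1)`. -/
theorem orderPolytope_ehrhart_eq_orderPolynomial (P : Type) [Fintype P] [PartialOrder P]
    (p q : Polynomial ℚ)
    (hp : ∀ t : ℕ, 0 < t → p.eval (t : ℚ) = Nat.card (P →o Fin t))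
    (hq : ∀ t : ℕ, 0 < t →
      q.eval (t : ℚ) =
        Set.ncard {x : P → ℤ | (fun a => (x a : ℝ)) ∈ (t : ℝ) • orderPolytope P}) :
    (∀ t : ℕ, 0 < t →
      Set.ncard {x : P → ℤ | (fun a => (x a : ℝ)) ∈ (t : ℝ) • orderPolytope P} =
        Nat.card (P →o Fin (t + 1))) ∧
    q = p.comp (X + 1) := by
  have key : ∀ t : ℕ, 0 < t →
      Set.ncard {x : P → ℤ | (fun a => (x a : ℝ)) ∈ (t : ℝ) • orderPolytope P} =
        Nat.card (P →o Fin (t + 1)) := by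
    intro t ht
    have hset : {x : P → ℤ | (fun a => (x a : ℝ)) ∈ (t : ℝ) • orderPolytope P} =
        {x : P → ℤ | (∀ a, 0 ≤ x a ∧ x a ≤ t) ∧ Monotone x} := by
      ext x; exact mem_scaled_orderPolytope t ht x
    rw [hset, ← Nat.card_coe_set_eq]
    exact Nat.card_eq_of_bijective _ (latticeEquiv (P := P) t).bijective
  refine ⟨key, ?_⟩
  have heval : ∀ t : ℕ, 0 < t → (q - p.comp (X + 1)).eval (t : ℚ) = 0 := by
    intro t ht
    have h1 := hq t ht
    have h2 := hp (t + 1) (Nat.succ_pos t)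
    rw [key t ht] at h1
    have h3 : ((t + 1 : ℕ) : ℚ) = (t : ℚ) + 1 := by push_cast; ring
    rw [h3] at h2
    simp [Polynomial.eval_comp, h1, h2]
  have hzero : q - p.comp (X + 1) = 0 := by
    apply Polynomial.eq_zero_of_infinite_isRoot
    apply Set.Infinite.mono (s := (fun n : ℕ => ((n + 1 : ℕ) : ℚ)) '' Set.univ)
    · rintro x ⟨n, -, rfl⟩
      exact heval (n + 1) (Nat.succ_pos n)
    · apply Set.infinite_of_injective_forall_mem (f := fun n : ℕ => ((n + 1 : ℕ) : ℚ))
      · intro a b hab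
        simp only [] at hab
        have : a + 1 = b + 1 := by exact_mod_cast hab
        omega
      · exact fun n => ⟨n, trivial, rfl⟩
  linear_combination (norm := ring_nf) hzero
end

section
/- The base polytope of a snake matroid S of rank k on n elements is integrally equivalent (via a lattice-point-preserving affine transformation) to the order polytope of the fence poset given by the cell poset of its border-strip skew-shape representation. -/
open Finset Pointwise

/-- The cells of the border-strip skew shape bounded by the paths with north-step
sets `SL` (lower) and `SU` (upper): the cell in row `r+1` (for `r : Fin k`) and
column `x` exists when `u_{r+1} - (r+1) < x ≤ l_{r+1} - (r+1)`, where `u_i`, `l_i`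
are the positions of the `i`-th north steps of the two paths. -/
def Cells (n k : ℕ) (SL SU : Finset (Fin n)) (hL : SL.card = k) (hU : SU.card = k) :
    Type :=
  {c : ℤ × Fin k //
    ((SU.orderEmbOfFin hU c.2 : ℕ) : ℤ) - ((c.2 : ℕ) + 1) < c.1 ∧
    c.1 ≤ ((SL.orderEmbOfFin hL c.2 : ℕ) : ℤ) - ((c.2 : ℕ) + 1)}

/-- The cell-poset (fence) order on the cells of the border strip: componentwise,
generated by adjacency of cells. -/
def cellLE {n k : ℕ} {SL SU : Finset (Fin n)} {hL : SL.card = k} {hU : SU.card = k}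
    (c c' : Cells n k SL SU hL hU) : Prop :=
  c.1.1 ≤ c'.1.1 ∧ (c'.1.2 : ℕ) ≤ (c.1.2 : ℕ)

/-- The order polytope of the cell poset of the border strip. -/
def cellOrderPolytope (n k : ℕ) (SL SU : Finset (Fin n))
    (hL : SL.card = k) (hU : SU.card = k) : Set (Cells n k SL SU hL hU → ℝ) :=
  {f | (∀ c, 0 ≤ f c ∧ f c ≤ 1) ∧ ∀ c c', cellLE c c' → f c ≤ f c'}


namespace SnakeProof

lemma pathCount_orderEmb {n k : ℕ} (S : Finset (Fin n)) (h : S.card = k) (m : ℕ) :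
    pathCount S m = (univ.filter fun j : Fin k => ((S.orderEmbOfFin h j : Fin n) : ℕ) < m).card := by
  classical
  apply Finset.card_bij (fun (i : Fin n) hi => (S.orderIsoOfFin h).symm ⟨i, by
    simp_all [Finset.mem_filter]⟩)
  · intro a ha
    simp only [Finset.mem_filter, Finset.mem_univ, true_and]
    rw [← Finset.coe_orderIsoOfFin_apply]
    simp only [OrderIso.apply_symm_apply]
    exact (Finset.mem_filter.mp ha).2
  · intro a ha b hb hab
    have := congrArg (S.orderIsoOfFin h) hab
    simp only [OrderIso.apply_symm_apply] at this
    exact congrArg Subtype.val this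
  · intro b hb
    refine ⟨S.orderEmbOfFin h b, ?_, ?_⟩
    · simp only [Finset.mem_filter]
      exact ⟨Finset.orderEmbOfFin_mem S h b, (Finset.mem_filter.mp hb).2⟩
    · have : S.orderIsoOfFin h b = ⟨S.orderEmbOfFin h b, Finset.orderEmbOfFin_mem S h b⟩ := by
        apply Subtype.ext
        simp [Finset.coe_orderIsoOfFin_apply]
      rw [← this, OrderIso.symm_apply_apply]

lemma pathCount_mono {n : ℕ} (S : Finset (Fin n)) {m m' : ℕ} (h : m ≤ m') :
    pathCount S m ≤ pathCount S m' :=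
  Finset.card_le_card <| Finset.monotone_filter_right S fun i hi => by omega

lemma pathCount_succ {n : ℕ} (S : Finset (Fin n)) (m : ℕ) :
    pathCount S (m + 1) =
      pathCount S m + (if h : m < n then (if (⟨m, h⟩ : Fin n) ∈ S then 1 else 0) else 0) := by
  classical
  by_cases hmn : m < n
  · rw [dif_pos hmn]
    by_cases hmB : (⟨m, hmn⟩ : Fin n) ∈ S
    · rw [if_pos hmB]
      have he : S.filter (fun i : Fin n => (i : ℕ) < m + 1)
          = insert (⟨m, hmn⟩ : Fin n) (S.filter (fun i : Fin n => (i : ℕ) < m)) := by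
        ext i
        simp only [Finset.mem_filter, Finset.mem_insert, Fin.ext_iff]
        constructor
        · rintro ⟨hiS, hlt⟩
          rcases Nat.lt_succ_iff_lt_or_eq.mp hlt with h' | h'
          · exact Or.inr ⟨hiS, h'⟩
          · exact Or.inl h'
        · rintro (h' | ⟨hiS, hlt⟩)
          · exact ⟨by rwa [show i = (⟨m, hmn⟩ : Fin n) from Fin.ext h'], by omega⟩
          · exact ⟨hiS, by omega⟩
      rw [pathCount, he, Finset.card_insert_of_notMem (by
        simp only [Finset.mem_filter, not_and]
        intro _
        omega)]
      rfl
    · rw [if_neg hmB]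
      have he : S.filter (fun i : Fin n => (i : ℕ) < m + 1)
          = S.filter (fun i : Fin n => (i : ℕ) < m) := by
        ext i
        simp only [Finset.mem_filter, and_congr_right_iff]
        intro hiS
        constructor
        · intro hlt
          rcases Nat.lt_succ_iff_lt_or_eq.mp hlt with h' | h'
          · exact h'
          · exact absurd (by rwa [show i = (⟨m, hmn⟩ : Fin n) from Fin.ext h'] at hiS) hmB
        · omega
      rw [pathCount, he]
      simp [pathCount]
  · rw [dif_neg hmn]
    have he : S.filter (fun i : Fin n => (i : ℕ) < m + 1)
        = S.filter (fun i : Fin n => (i : ℕ) < m) := by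
      ext i
      have := i.2
      simp only [Finset.mem_filter, and_congr_right_iff]
      omega
    rw [pathCount, he]
    simp [pathCount]

lemma pathCount_succ_le {n : ℕ} (S : Finset (Fin n)) (m : ℕ) :
    pathCount S (m + 1) ≤ pathCount S m + 1 := by
  rw [pathCount_succ]
  split_ifs <;> omega

lemma pathCount_zero {n : ℕ} (S : Finset (Fin n)) : pathCount S 0 = 0 := by
  simp [pathCount]

lemma pathCount_all {n : ℕ} (S : Finset (Fin n)) {m : ℕ} (h : n ≤ m) :
    pathCount S m = S.card := by
  rw [pathCount, Finset.filter_true_of_mem]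
  intro i _
  have := i.2
  omega


structure Ctx (n k : ℕ) where
  SL : Finset (Fin n)
  SU : Finset (Fin n)
  hL : SL.card = k
  hU : SU.card = k
  hk : 1 ≤ k
  hrows : ∀ r : Fin k, ((SU.orderEmbOfFin hU) r : ℕ) < ((SL.orderEmbOfFin hL) r : ℕ)
  hstrip : ∀ (r : Fin k) (h : (r : ℕ) + 1 < k),
      ((SL.orderEmbOfFin hL) r : ℕ) = ((SU.orderEmbOfFin hU) ⟨(r : ℕ) + 1, h⟩ : ℕ)

namespace Ctx

variable {n k : ℕ} (C : Ctx n k)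

def u (r : Fin k) : ℕ := ((C.SU.orderEmbOfFin C.hU) r : ℕ)
def l (r : Fin k) : ℕ := ((C.SL.orderEmbOfFin C.hL) r : ℕ)
def Cl : Type := Cells n k C.SL C.SU C.hL C.hU
def fzero : Fin k := ⟨0, C.hk⟩
def flast : Fin k := ⟨k - 1, by have := C.hk; omega⟩

lemma u_mono {r j : Fin k} (h : r ≤ j) : C.u r ≤ C.u j := by
  have := (C.SU.orderEmbOfFin C.hU).monotone h
  exact_mod_cast this

lemma l_mono {r j : Fin k} (h : r ≤ j) : C.l r ≤ C.l j := by
  have := (C.SL.orderEmbOfFin C.hL).monotone h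
  exact_mod_cast this

lemma u_lt_l (r : Fin k) : C.u r < C.l r := C.hrows r

lemma l_eq_u_succ (r : Fin k) (h : (r : ℕ) + 1 < k) : C.l r = C.u ⟨(r : ℕ) + 1, h⟩ :=
  C.hstrip r h

lemma l_lt_n (r : Fin k) : C.l r < n := ((C.SL.orderEmbOfFin C.hL) r).2

lemma fzero_le (r : Fin k) : C.fzero ≤ r := by
  simp only [fzero, Fin.le_def]
  omega

lemma le_flast (r : Fin k) : r ≤ C.flast := by
  have := r.2
  simp only [flast, Fin.le_def]
  omega

def mzC (c : C.Cl) : ℤ := c.1.1 + ((c.1.2 : ℕ) : ℤ) + 1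

def mC (c : C.Cl) : ℕ := (C.mzC c).toNat

lemma mz_bounds (c : C.Cl) :
    ((C.u c.1.2 : ℕ) : ℤ) < C.mzC c ∧ C.mzC c ≤ ((C.l c.1.2 : ℕ) : ℤ) := by
  obtain ⟨h1, h2⟩ := c.2
  unfold u l mzC
  omega

lemma mC_cast (c : C.Cl) : ((C.mC c : ℕ) : ℤ) = C.mzC c := by
  have h := (C.mz_bounds c).1
  have : (0 : ℤ) ≤ C.mzC c := le_trans (by positivity) (le_of_lt h)
  simp [mC, Int.toNat_of_nonneg this]

lemma mC_bounds (c : C.Cl) : C.u c.1.2 < C.mC c ∧ C.mC c ≤ C.l c.1.2 := by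
  obtain ⟨h1, h2⟩ := C.mz_bounds c
  rw [← C.mC_cast c] at h1 h2
  exact ⟨by exact_mod_cast h1, by exact_mod_cast h2⟩

lemma mC_lt_n (c : C.Cl) : C.mC c < n :=
  lt_of_le_of_lt (C.mC_bounds c).2 (C.l_lt_n _)

lemma filter_SU (r : Fin k) (m : ℕ) (h1 : C.u r < m) (h2 : m ≤ C.l r) :
    (univ.filter fun j : Fin k => C.u j < m) = Finset.Iic r := by
  ext j
  simp only [mem_filter, mem_univ, true_and, mem_Iic]
  constructor
  · intro hj
    by_contra hc
    push_neg at hc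
    have hrk : (r : ℕ) + 1 < k := lt_of_le_of_lt (Nat.succ_le_of_lt hc) j.2
    have hle : C.u ⟨(r : ℕ) + 1, hrk⟩ ≤ C.u j := C.u_mono hc
    rw [← C.l_eq_u_succ r hrk] at hle
    omega
  · intro hj
    have := C.u_mono hj
    omega

lemma filter_SL (r : Fin k) (m : ℕ) (h1 : C.u r < m) (h2 : m ≤ C.l r) :
    (univ.filter fun j : Fin k => C.l j < m) = Finset.Iio r := by
  ext j
  simp only [mem_filter, mem_univ, true_and, mem_Iio]
  constructor
  · intro hj
    by_contra hc
    push_neg at hc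
    have := C.l_mono hc
    omega
  · intro hj
    have hjk : (j : ℕ) + 1 < k := lt_of_le_of_lt (Nat.succ_le_of_lt hj) r.2
    have h3 : C.u ⟨(j : ℕ) + 1, hjk⟩ ≤ C.u r := C.u_mono hj
    rw [← C.l_eq_u_succ j hjk] at h3
    omega

lemma pc_SU (r : Fin k) (m : ℕ) (h1 : C.u r < m) (h2 : m ≤ C.l r) :
    pathCount C.SU m = (r : ℕ) + 1 := by
  rw [pathCount_orderEmb C.SU C.hU,
    show (univ.filter fun j : Fin k => ((C.SU.orderEmbOfFin C.hU j : Fin n) : ℕ) < m)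
      = univ.filter (fun j : Fin k => C.u j < m) from rfl,
    C.filter_SU r m h1 h2, Fin.card_Iic]

lemma pc_SL (r : Fin k) (m : ℕ) (h1 : C.u r < m) (h2 : m ≤ C.l r) :
    pathCount C.SL m = (r : ℕ) := by
  rw [pathCount_orderEmb C.SL C.hL,
    show (univ.filter fun j : Fin k => ((C.SL.orderEmbOfFin C.hL j : Fin n) : ℕ) < m)
      = univ.filter (fun j : Fin k => C.l j < m) from rfl,
    C.filter_SL r m h1 h2, Fin.card_Iio]

lemma pc_SL_mC (c : C.Cl) : pathCount C.SL (C.mC c) = (c.1.2 : ℕ) :=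
  C.pc_SL c.1.2 _ (C.mC_bounds c).1 (C.mC_bounds c).2

lemma pc_SU_mC (c : C.Cl) : pathCount C.SU (C.mC c) = (c.1.2 : ℕ) + 1 :=
  C.pc_SU c.1.2 _ (C.mC_bounds c).1 (C.mC_bounds c).2

lemma pc_low_SL {m : ℕ} (h : m ≤ C.u C.fzero) : pathCount C.SL m = 0 := by
  rw [pathCount_orderEmb C.SL C.hL, Finset.card_eq_zero, Finset.filter_eq_empty_iff]
  intro j _
  have h1 := C.u_mono (C.fzero_le j)
  have h2 := C.u_lt_l j
  unfold l at *
  omega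

lemma pc_low_SU {m : ℕ} (h : m ≤ C.u C.fzero) : pathCount C.SU m = 0 := by
  rw [pathCount_orderEmb C.SU C.hU, Finset.card_eq_zero, Finset.filter_eq_empty_iff]
  intro j _
  have h1 := C.u_mono (C.fzero_le j)
  unfold u at *
  omega

lemma pc_high_SL {m : ℕ} (h : C.l C.flast < m) : pathCount C.SL m = k := by
  rw [pathCount_orderEmb C.SL C.hL, Finset.filter_true_of_mem, Finset.card_univ,
    Fintype.card_fin]
  intro j _
  have h1 := C.l_mono (C.le_flast j)
  unfold l at *
  omega

lemma pc_high_SU {m : ℕ} (h : C.l C.flast < m) : pathCount C.SU m = k := by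
  rw [pathCount_orderEmb C.SU C.hU, Finset.filter_true_of_mem, Finset.card_univ,
    Fintype.card_fin]
  intro j _
  have h1 := C.l_mono (C.le_flast j)
  have h2 := C.u_lt_l j
  unfold u l at *
  omega

abbrev inStrip (m : ℕ) : Prop := C.u C.fzero < m ∧ m ≤ C.l C.flast

def rowOf (m : ℕ) (hm : C.inStrip m) : Fin k :=
  (univ.filter (fun j : Fin k => C.u j < m)).max'
    ⟨C.fzero, by simp only [mem_filter, mem_univ, true_and]; exact hm.1⟩

lemma rowOf_lt (m : ℕ) (hm : C.inStrip m) : C.u (C.rowOf m hm) < m := by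
  have := Finset.max'_mem (univ.filter (fun j : Fin k => C.u j < m))
    ⟨C.fzero, by simp only [mem_filter, mem_univ, true_and]; exact hm.1⟩
  simp only [mem_filter] at this
  exact this.2

lemma rowOf_le (m : ℕ) (hm : C.inStrip m) : m ≤ C.l (C.rowOf m hm) := by
  by_cases h : ((C.rowOf m hm : ℕ)) + 1 < k
  · by_contra hc
    push_neg at hc
    rw [C.l_eq_u_succ _ h] at hc
    have hmem : (⟨(C.rowOf m hm : ℕ) + 1, h⟩ : Fin k)
        ∈ univ.filter (fun j : Fin k => C.u j < m) := by
      simp only [mem_filter, mem_univ, true_and]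
      exact hc
    have hle : (⟨(C.rowOf m hm : ℕ) + 1, h⟩ : Fin k) ≤ C.rowOf m hm :=
      Finset.le_max' _ _ hmem
    simp only [Fin.le_def] at hle
    omega
  · have hrl : C.rowOf m hm = C.flast := by
      have := (C.rowOf m hm).2
      apply Fin.ext
      simp only [flast]
      omega
    rw [hrl]
    exact hm.2

def cellOf (m : ℕ) (hm : C.inStrip m) : C.Cl :=
  ⟨((m : ℤ) - ((C.rowOf m hm : ℕ) : ℤ) - 1, C.rowOf m hm), by
    have h1 := C.rowOf_lt m hm
    have h2 := C.rowOf_le m hm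
    unfold u at h1
    unfold l at h2
    constructor <;> · simp only []; omega⟩

lemma mC_cellOf (m : ℕ) (hm : C.inStrip m) : C.mC (C.cellOf m hm) = m := by
  unfold mC mzC cellOf
  simp only []
  omega

lemma row_cellOf (m : ℕ) (hm : C.inStrip m) : (C.cellOf m hm).1.2 = C.rowOf m hm := rfl

lemma col_cellOf (m : ℕ) (hm : C.inStrip m) :
    (C.cellOf m hm).1.1 = (m : ℤ) - ((C.rowOf m hm : ℕ) : ℤ) - 1 := rfl

lemma mC_inj {c c' : C.Cl} (h : C.mC c = C.mC c') : c = c' := by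
  have hrow : c.1.2 = c'.1.2 := by
    rcases lt_trichotomy c.1.2 c'.1.2 with hlt | heq | hgt
    · exfalso
      have hk1 : ((c.1.2 : ℕ)) + 1 < k := lt_of_le_of_lt (Nat.succ_le_of_lt hlt) c'.1.2.2
      have h1 : C.u ⟨(c.1.2 : ℕ) + 1, hk1⟩ ≤ C.u c'.1.2 := C.u_mono hlt
      rw [← C.l_eq_u_succ _ hk1] at h1
      have h2 := (C.mC_bounds c).2
      have h3 := (C.mC_bounds c').1
      omega
    · exact heq
    · exfalso
      have hk1 : ((c'.1.2 : ℕ)) + 1 < k := lt_of_le_of_lt (Nat.succ_le_of_lt hgt) c.1.2.2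
      have h1 : C.u ⟨(c'.1.2 : ℕ) + 1, hk1⟩ ≤ C.u c.1.2 := C.u_mono hgt
      rw [← C.l_eq_u_succ _ hk1] at h1
      have h2 := (C.mC_bounds c').2
      have h3 := (C.mC_bounds c).1
      omega
  have hcol : c.1.1 = c'.1.1 := by
    have e1 := C.mC_cast c
    have e2 := C.mC_cast c'
    unfold mzC at e1 e2
    rw [hrow] at e1
    omega
  exact Subtype.ext (Prod.ext hcol hrow)

lemma strip_mC (c : C.Cl) : C.inStrip (C.mC c) := by
  constructor
  · exact lt_of_le_of_lt (C.u_mono (C.fzero_le c.1.2)) (C.mC_bounds c).1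
  · exact le_trans (C.mC_bounds c).2 (C.l_mono (C.le_flast c.1.2))

lemma cellOf_mC (c : C.Cl) (hm : C.inStrip (C.mC c)) : C.cellOf (C.mC c) hm = c :=
  C.mC_inj (by rw [C.mC_cellOf])

lemma rowOf_mC (c : C.Cl) (hm : C.inStrip (C.mC c)) : C.rowOf (C.mC c) hm = c.1.2 := by
  rw [← C.row_cellOf (C.mC c) hm, C.cellOf_mC c hm]


end Ctx

/-- partial sum of the first `m` coordinates -/
def psum {n : ℕ} (x : Fin n → ℝ) (m : ℕ) : ℝ :=
  ∑ i ∈ univ.filter (fun i : Fin n => (i : ℕ) < m), x i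

lemma psum_zero {n : ℕ} (x : Fin n → ℝ) : psum x 0 = 0 := by
  simp [psum]

lemma psum_add {n : ℕ} (x y : Fin n → ℝ) (m : ℕ) :
    psum (x + y) m = psum x m + psum y m := by
  simp [psum, Finset.sum_add_distrib]

lemma psum_smul {n : ℕ} (a : ℝ) (x : Fin n → ℝ) (m : ℕ) :
    psum (a • x) m = a * psum x m := by
  simp [psum, Finset.mul_sum]

lemma psum_succ {n : ℕ} (x : Fin n → ℝ) (m : ℕ) :
    psum x (m + 1) = psum x m + (if h : m < n then x ⟨m, h⟩ else 0) := by
  by_cases hmn : m < n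
  · rw [dif_pos hmn]
    have he : univ.filter (fun i : Fin n => (i : ℕ) < m + 1)
        = insert (⟨m, hmn⟩ : Fin n) (univ.filter (fun i : Fin n => (i : ℕ) < m)) := by
      ext i
      simp only [Finset.mem_filter, Finset.mem_insert, Finset.mem_univ, true_and, Fin.ext_iff]
      omega
    rw [psum, he, Finset.sum_insert (by simp)]
    rw [psum]
    ring
  · rw [dif_neg hmn]
    have he : univ.filter (fun i : Fin n => (i : ℕ) < m + 1)
        = univ.filter (fun i : Fin n => (i : ℕ) < m) := by
      ext i
      have := i.2
      simp only [Finset.mem_filter, Finset.mem_univ, true_and]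
      omega
    rw [psum, he]
    simp [psum]

lemma psum_mono {n : ℕ} (x : Fin n → ℝ) (h0 : ∀ i, 0 ≤ x i) {m m' : ℕ} (h : m ≤ m') :
    psum x m ≤ psum x m' := by
  apply Finset.sum_le_sum_of_subset_of_nonneg
  · exact Finset.monotone_filter_right _ fun i hi => by omega
  · intro i _ _
    exact h0 i

lemma psum_diff_le {n : ℕ} (x : Fin n → ℝ) (h1 : ∀ i, x i ≤ 1) {m m' : ℕ} (h : m' ≤ m) :
    psum x m ≤ psum x m' + ((m : ℝ) - (m' : ℝ)) := by
  have hsub : univ.filter (fun i : Fin n => (i : ℕ) < m')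
      ⊆ univ.filter (fun i : Fin n => (i : ℕ) < m) :=
    Finset.monotone_filter_right _ fun i hi => by omega
  have hsplit := Finset.sum_sdiff (f := x) hsub
  have hcard : ((univ.filter (fun i : Fin n => (i : ℕ) < m)
      \ univ.filter (fun i : Fin n => (i : ℕ) < m')).card : ℝ) ≤ (m : ℝ) - (m' : ℝ) := by
    have hle : (univ.filter (fun i : Fin n => (i : ℕ) < m)
        \ univ.filter (fun i : Fin n => (i : ℕ) < m')).card ≤ (Finset.Ico m' m).card := by
      refine Finset.card_le_card_of_injOn (fun i : Fin n => (i : ℕ)) ?_ ?_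
      · intro i hi
        simp only [Finset.mem_coe, Finset.mem_sdiff, Finset.mem_filter, Finset.mem_univ, true_and] at hi
        simp only [Finset.mem_coe, Finset.mem_Ico]
        omega
      · exact Fin.val_injective.injOn
    rw [Nat.card_Ico] at hle
    calc ((univ.filter (fun i : Fin n => (i : ℕ) < m)
        \ univ.filter (fun i : Fin n => (i : ℕ) < m')).card : ℝ)
        ≤ ((m - m' : ℕ) : ℝ) := by exact_mod_cast hle
      _ ≤ (m : ℝ) - (m' : ℝ) := by
          rw [Nat.cast_sub h]
  have hsum : ∑ i ∈ (univ.filter (fun i : Fin n => (i : ℕ) < m)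
      \ univ.filter (fun i : Fin n => (i : ℕ) < m')), x i
      ≤ ((univ.filter (fun i : Fin n => (i : ℕ) < m)
      \ univ.filter (fun i : Fin n => (i : ℕ) < m')).card : ℝ) := by
    calc ∑ i ∈ _, x i ≤ ∑ i ∈ (univ.filter (fun i : Fin n => (i : ℕ) < m)
        \ univ.filter (fun i : Fin n => (i : ℕ) < m')), (1 : ℝ) :=
          Finset.sum_le_sum fun i _ => h1 i
      _ = _ := by rw [Finset.sum_const, nsmul_eq_mul, mul_one]
  unfold psum
  rw [← hsplit]
  linarith

lemma psum_univ {n : ℕ} (x : Fin n → ℝ) {m : ℕ} (h : n ≤ m) :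
    psum x m = ∑ i, x i := by
  rw [psum, Finset.filter_true_of_mem]
  intro i _
  have := i.2
  omega

namespace Ctx

variable {n k : ℕ} (C : Ctx n k)

def sfun (f : C.Cl → ℝ) (m : ℕ) : ℝ :=
  (pathCount C.SL m : ℝ) + if h : C.inStrip m then f (C.cellOf m h) else 0

lemma sfun_zero (f : C.Cl → ℝ) : C.sfun f 0 = 0 := by
  rw [sfun, pathCount_zero, dif_neg (by intro h; exact absurd h.1 (by omega))]
  simp

lemma sfun_low (f : C.Cl → ℝ) {m : ℕ} (h : m ≤ C.u C.fzero) : C.sfun f m = 0 := by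
  rw [sfun, C.pc_low_SL h, dif_neg (by intro hc; omega)]
  simp

lemma sfun_high (f : C.Cl → ℝ) {m : ℕ} (h : C.l C.flast < m) : C.sfun f m = k := by
  rw [sfun, C.pc_high_SL h, dif_neg (by intro hc; have := hc.2; omega)]
  simp

lemma sfun_strip (f : C.Cl → ℝ) {m : ℕ} (hm : C.inStrip m) :
    C.sfun f m = ((C.rowOf m hm : ℕ) : ℝ) + f (C.cellOf m hm) := by
  rw [sfun, dif_pos hm]
  congr 1
  have := C.pc_SL_mC (C.cellOf m hm)
  rw [C.mC_cellOf m hm, C.row_cellOf m hm] at this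
  rw [this]

noncomputable def Tmap : (Fin n → ℝ) →ᵃ[ℝ] (C.Cl → ℝ) where
  toFun x := fun c => psum x (C.mC c) - ((c.1.2 : ℕ) : ℝ)
  linear :=
    { toFun := fun x => fun c => psum x (C.mC c)
      map_add' := by intro x y; funext c; simp [psum_add]
      map_smul' := by intro a x; funext c; simp [psum_smul]  }
  map_vadd' := by
    intro p v
    funext c
    simp only [vadd_eq_add, Pi.add_apply, LinearMap.coe_mk, AddHom.coe_mk, psum_add]
    ring

lemma Tmap_apply (x : Fin n → ℝ) (c : C.Cl) :
    C.Tmap x c = psum x (C.mC c) - ((c.1.2 : ℕ) : ℝ) := rfl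

noncomputable def Umap : (C.Cl → ℝ) →ᵃ[ℝ] (Fin n → ℝ) where
  toFun f := fun i => C.sfun f ((i : ℕ) + 1) - C.sfun f (i : ℕ)
  linear :=
    { toFun := fun f => fun i =>
        (if h : C.inStrip ((i : ℕ) + 1) then f (C.cellOf _ h) else 0) -
        (if h : C.inStrip (i : ℕ) then f (C.cellOf _ h) else 0)
      map_add' := by
        intro f g
        funext i
        simp only [Pi.add_apply]
        split_ifs <;> ring
      map_smul' := by
        intro a f
        funext i
        simp only [Pi.smul_apply, smul_eq_mul, RingHom.id_apply]
        split_ifs <;> ring }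
  map_vadd' := by
    intro p v
    funext i
    simp only [vadd_eq_add, Pi.add_apply, LinearMap.coe_mk, AddHom.coe_mk, sfun]
    split_ifs <;> ring

lemma Umap_apply (f : C.Cl → ℝ) (i : Fin n) :
    C.Umap f i = C.sfun f ((i : ℕ) + 1) - C.sfun f (i : ℕ) := rfl

lemma psum_Umap (f : C.Cl → ℝ) : ∀ m, m ≤ n → psum (C.Umap f) m = C.sfun f m := by
  intro m
  induction m with
  | zero => intro _; rw [psum_zero, C.sfun_zero]
  | succ m ih =>
      intro h
      rw [psum_succ, ih (by omega), dif_pos (show m < n by omega)]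
      have : C.Umap f ⟨m, show m < n by omega⟩
          = C.sfun f (m + 1) - C.sfun f m := rfl
      rw [this]
      ring

lemma TU (f : C.Cl → ℝ) : C.Tmap (C.Umap f) = f := by
  funext c
  rw [C.Tmap_apply, C.psum_Umap f (C.mC c) (le_of_lt (C.mC_lt_n c)),
    C.sfun_strip f (C.strip_mC c), C.rowOf_mC c (C.strip_mC c), C.cellOf_mC c (C.strip_mC c)]
  ring


lemma psum_Tmap (x : Fin n → ℝ)
    (hz : ∀ i : Fin n, ((i : ℕ) < C.u C.fzero ∨ C.l C.flast < (i : ℕ)) → x i = 0)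
    (hs : ∑ i, x i = (k : ℝ)) :
    ∀ m, C.sfun (C.Tmap x) m = psum x m := by
  intro m
  by_cases hm : C.inStrip m
  · rw [C.sfun_strip _ hm, C.Tmap_apply, C.mC_cellOf m hm, C.row_cellOf m hm]
    ring
  · rcases Nat.lt_or_ge (C.u C.fzero) m with h1 | h1
    · have h2 : C.l C.flast < m := by
        by_contra hc
        exact hm ⟨h1, by omega⟩
      rw [C.sfun_high _ h2]
      have hsplit := Finset.sum_filter_add_sum_filter_not univ
        (fun i : Fin n => (i : ℕ) < m) x
      have hzero : ∑ i ∈ univ.filter (fun i : Fin n => ¬ (i : ℕ) < m), x i = 0 := by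
        apply Finset.sum_eq_zero
        intro i hi
        simp only [Finset.mem_filter, Finset.mem_univ, true_and, not_lt] at hi
        exact hz i (Or.inr (by omega))
      rw [psum]
      linarith
    · rw [C.sfun_low _ h1]
      rw [psum]
      symm
      apply Finset.sum_eq_zero
      intro i hi
      simp only [Finset.mem_filter, Finset.mem_univ, true_and] at hi
      exact hz i (Or.inl (by omega))

lemma UT (x : Fin n → ℝ)
    (hz : ∀ i : Fin n, ((i : ℕ) < C.u C.fzero ∨ C.l C.flast < (i : ℕ)) → x i = 0)
    (hs : ∑ i, x i = (k : ℝ)) :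
    C.Umap (C.Tmap x) = x := by
  funext i
  rw [C.Umap_apply, C.psum_Tmap x hz hs, C.psum_Tmap x hz hs, psum_succ,
    dif_pos i.2]
  simp


end Ctx

/-- vertex of the base polytope: indicator vector of a basis -/
noncomputable def vert {n : ℕ} (B : Finset (Fin n)) : Fin n → ℝ :=
  fun i => if i ∈ B then (1 : ℝ) else 0

lemma psum_vert {n : ℕ} (B : Finset (Fin n)) (m : ℕ) :
    psum (vert B) m = (pathCount B m : ℝ) := by
  classical
  rw [psum, pathCount]
  rw [show (∑ i ∈ univ.filter (fun i : Fin n => (i : ℕ) < m), vert B i)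
      = ∑ i ∈ univ.filter (fun i : Fin n => (i : ℕ) < m), (if i ∈ B then (1:ℝ) else 0)
    from rfl, Finset.sum_boole]
  congr 1
  apply Finset.card_bij (fun i _ => i)
  · intro a ha
    simp only [Finset.mem_filter, Finset.mem_univ, true_and] at ha ⊢
    exact ⟨ha.2, ha.1⟩
  · intro a _ b _ h
    exact h
  · intro b hb
    simp only [Finset.mem_filter, Finset.mem_univ, true_and] at hb ⊢
    exact ⟨b, ⟨hb.2, hb.1⟩, rfl⟩

lemma sum_vert {n : ℕ} (B : Finset (Fin n)) :
    ∑ i, vert B i = (B.card : ℝ) := by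
  classical
  rw [show (∑ i, vert B i) = ∑ i : Fin n, (if i ∈ B then (1:ℝ) else 0) from rfl,
    Finset.sum_boole]
  congr 1
  rw [Finset.filter_mem_eq_inter, Finset.univ_inter]

lemma vert_nonneg {n : ℕ} (B : Finset (Fin n)) (i : Fin n) : 0 ≤ vert B i := by
  rw [vert]; split_ifs <;> norm_num

lemma vert_le_one {n : ℕ} (B : Finset (Fin n)) (i : Fin n) : vert B i ≤ 1 := by
  rw [vert]; split_ifs <;> norm_num

namespace Ctx

variable {n k : ℕ} (C : Ctx n k)

lemma vert_zero_outside (M : Matr (Fin n))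
    (hbases : ∀ B : Finset (Fin n), M.IsBase B ↔
      (B.card = k ∧ ∀ m : ℕ, pathCount C.SL m ≤ pathCount B m ∧
        pathCount B m ≤ pathCount C.SU m))
    {B : Finset (Fin n)} (hB : M.IsBase B) :
    ∀ i : Fin n, ((i : ℕ) < C.u C.fzero ∨ C.l C.flast < (i : ℕ)) → vert B i = 0 := by
  obtain ⟨hcard, hcount⟩ := (hbases B).mp hB
  intro i hi
  rw [vert, if_neg ?_]
  rcases hi with h | h
  · intro hiB
    have hc := (hcount ((i : ℕ) + 1)).2
    rw [C.pc_low_SU (show (i : ℕ) + 1 ≤ C.u C.fzero by omega)] at hc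
    have hmem : i ∈ B.filter (fun j : Fin n => (j : ℕ) < (i : ℕ) + 1) :=
      Finset.mem_filter.mpr ⟨hiB, by omega⟩
    have := Finset.card_pos.mpr ⟨i, hmem⟩
    rw [pathCount] at hc
    omega
  · intro hiB
    have h1 := (hcount (i : ℕ)).1
    rw [C.pc_high_SL h] at h1
    have hfeq : B.filter (fun j : Fin n => (j : ℕ) < (i : ℕ)) = B :=
      Finset.eq_of_subset_of_card_le (Finset.filter_subset _ _) (by
        rw [pathCount] at h1
        omega)
    rw [← hfeq] at hiB
    have := (Finset.mem_filter.mp hiB).2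
    omega

lemma vert_sum (M : Matr (Fin n))
    (hbases : ∀ B : Finset (Fin n), M.IsBase B ↔
      (B.card = k ∧ ∀ m : ℕ, pathCount C.SL m ≤ pathCount B m ∧
        pathCount B m ≤ pathCount C.SU m))
    {B : Finset (Fin n)} (hB : M.IsBase B) :
    ∑ i, vert B i = (k : ℝ) := by
  rw [sum_vert, ((hbases B).mp hB).1]

lemma Tmono (x : Fin n → ℝ) (h0 : ∀ i, 0 ≤ x i) (h1 : ∀ i, x i ≤ 1) {c c' : C.Cl}
    (hc1 : c.1.1 ≤ c'.1.1) (hc2 : (c'.1.2 : ℕ) ≤ (c.1.2 : ℕ)) :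
    C.Tmap x c ≤ C.Tmap x c' := by
  rw [C.Tmap_apply, C.Tmap_apply]
  have e1 := C.mC_cast c
  have e2 := C.mC_cast c'
  unfold mzC at e1 e2
  rcases le_or_gt (C.mC c) (C.mC c') with h | h
  · have hp := psum_mono x h0 h
    have hr : ((c'.1.2 : ℕ) : ℝ) ≤ ((c.1.2 : ℕ) : ℝ) := by exact_mod_cast hc2
    linarith
  · have hp := psum_diff_le x h1 (le_of_lt h)
    have hZ : ((C.mC c : ℕ) : ℤ) - ((C.mC c' : ℕ) : ℤ)
        ≤ ((c.1.2 : ℕ) : ℤ) - ((c'.1.2 : ℕ) : ℤ) := by omega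
    have hR : ((C.mC c : ℕ) : ℝ) - ((C.mC c' : ℕ) : ℝ)
        ≤ ((c.1.2 : ℕ) : ℝ) - ((c'.1.2 : ℕ) : ℝ) := by exact_mod_cast hZ
    linarith

lemma vert_T_bounds (M : Matr (Fin n))
    (hbases : ∀ B : Finset (Fin n), M.IsBase B ↔
      (B.card = k ∧ ∀ m : ℕ, pathCount C.SL m ≤ pathCount B m ∧
        pathCount B m ≤ pathCount C.SU m))
    {B : Finset (Fin n)} (hB : M.IsBase B) (c : C.Cl) :
    0 ≤ C.Tmap (vert B) c ∧ C.Tmap (vert B) c ≤ 1 := by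
  obtain ⟨hcard, hcount⟩ := (hbases B).mp hB
  rw [C.Tmap_apply, psum_vert]
  have h1 := (hcount (C.mC c)).1
  have h2 := (hcount (C.mC c)).2
  rw [C.pc_SL_mC c] at h1
  rw [C.pc_SU_mC c] at h2
  have hA : ((c.1.2 : ℕ) : ℝ) ≤ (pathCount B (C.mC c) : ℝ) := by exact_mod_cast h1
  have hB2 : (pathCount B (C.mC c) : ℝ) ≤ ((c.1.2 : ℕ) : ℝ) + 1 := by exact_mod_cast h2
  constructor <;> linarith


lemma u_strict {r j : Fin k} (h : r < j) : C.u r < C.u j := by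
  have := (C.SU.orderEmbOfFin C.hU).strictMono h
  exact_mod_cast this

lemma l_strict {r j : Fin k} (h : r < j) : C.l r < C.l j := by
  have := (C.SL.orderEmbOfFin C.hL).strictMono h
  exact_mod_cast this

lemma pc_SL_strip (m : ℕ) (hm : C.inStrip m) :
    pathCount C.SL m = ((C.rowOf m hm : ℕ)) := by
  have := C.pc_SL_mC (C.cellOf m hm)
  rwa [C.mC_cellOf, C.row_cellOf] at this

lemma pc_SU_strip (m : ℕ) (hm : C.inStrip m) :
    pathCount C.SU m = ((C.rowOf m hm : ℕ)) + 1 := by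
  have := C.pc_SU_mC (C.cellOf m hm)
  rwa [C.mC_cellOf, C.row_cellOf] at this

lemma step01 (f : C.Cl → ℝ)
    (hmono : ∀ c c' : C.Cl, c.1.1 ≤ c'.1.1 → (c'.1.2 : ℕ) ≤ (c.1.2 : ℕ) → f c ≤ f c')
    (h01 : ∀ c, f c = 0 ∨ f c = 1) (m : ℕ) :
    C.sfun f (m + 1) = C.sfun f m ∨ C.sfun f (m + 1) = C.sfun f m + 1 := by
  by_cases h1 : C.inStrip m <;> by_cases h2 : C.inStrip (m + 1)
  · -- both in the strip
    have hr := C.pc_SL_strip m h1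
    have hr' := C.pc_SL_strip (m + 1) h2
    have hstep := pathCount_succ_le C.SL m
    have hmono' := pathCount_mono C.SL (show m ≤ m + 1 by omega)
    have ec := C.col_cellOf m h1
    have ec' := C.col_cellOf (m + 1) h2
    have er := C.row_cellOf m h1
    have er' := C.row_cellOf (m + 1) h2
    rw [C.sfun_strip f h1, C.sfun_strip f h2]
    rcases (show pathCount C.SL (m+1) = pathCount C.SL m
        ∨ pathCount C.SL (m+1) = pathCount C.SL m + 1 from by omega) with hc | hc
    · rw [hr, hr'] at hc
      have hle : f (C.cellOf m h1) ≤ f (C.cellOf (m + 1) h2) := by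
        apply hmono
        · rw [ec, ec']
          push_cast
          omega
        · rw [er, er']
          omega
      have hcast : ((C.rowOf (m+1) h2 : ℕ) : ℝ) = ((C.rowOf m h1 : ℕ) : ℝ) := by
        exact_mod_cast hc
      rcases h01 (C.cellOf m h1) with ha | ha <;>
        rcases h01 (C.cellOf (m + 1) h2) with hb' | hb' <;>
        rw [ha, hb'] at hle ⊢ <;>
        first
          | (left; linarith)
          | (right; linarith)
          | linarith
    · rw [hr, hr'] at hc
      have hle : f (C.cellOf (m + 1) h2) ≤ f (C.cellOf m h1) := by
        apply hmono
        · rw [ec, ec']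
          push_cast
          omega
        · rw [er, er']
          omega
      have hcast : ((C.rowOf (m+1) h2 : ℕ) : ℝ) = ((C.rowOf m h1 : ℕ) : ℝ) + 1 := by
        exact_mod_cast hc
      rcases h01 (C.cellOf m h1) with ha | ha <;>
        rcases h01 (C.cellOf (m + 1) h2) with hb' | hb' <;>
        rw [ha, hb'] at hle ⊢ <;>
        first
          | (left; linarith)
          | (right; linarith)
          | linarith
  · -- m in strip, m+1 beyond: m is the last strip position
    have hm2 : C.l C.flast < m + 1 := by
      rcases h1 with ⟨h1a, h1b⟩
      by_contra hc
      exact h2 ⟨by omega, by omega⟩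
    have hmlast : m = C.l C.flast := by
      rcases h1 with ⟨h1a, h1b⟩
      omega
    have hrow : C.rowOf m h1 = C.flast := by
      have hle1 := C.rowOf_le m h1
      rcases lt_or_eq_of_le (C.le_flast (C.rowOf m h1)) with hlt | heq
      · exfalso
        have := C.l_strict hlt
        omega
      · exact heq
    have hcast : ((C.rowOf m h1 : ℕ) : ℝ) = (k : ℝ) - 1 := by
      rw [hrow]
      show (((k - 1 : ℕ) : ℕ) : ℝ) = (k : ℝ) - 1
      have := C.hk
      push_cast [Nat.cast_sub this]
      ring
    rw [C.sfun_strip f h1, C.sfun_high f hm2]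
    rcases h01 (C.cellOf m h1) with ha | ha <;> rw [ha]
    · right
      linarith
    · left
      linarith
  · -- m just before the strip: m = u fzero
    have hmu : m = C.u C.fzero := by
      rcases h2 with ⟨h2a, h2b⟩
      have : ¬ (C.u C.fzero < m ∧ m ≤ C.l C.flast) := h1
      omega
    have hrow : C.rowOf (m + 1) h2 = C.fzero := by
      have hlt := C.rowOf_lt (m + 1) h2
      rcases lt_or_eq_of_le (C.fzero_le (C.rowOf (m + 1) h2)) with hl | he
      · exfalso
        have := C.u_strict hl
        omega
      · exact he.symm
    have hcast : ((C.rowOf (m + 1) h2 : ℕ) : ℝ) = 0 := by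
      rw [hrow]
      simp [fzero]
    rw [C.sfun_low f (le_of_eq hmu), C.sfun_strip f h2]
    rcases h01 (C.cellOf (m + 1) h2) with ha | ha <;> rw [ha]
    · left
      linarith
    · right
      linarith
  · -- entirely outside the strip
    rcases Nat.lt_or_ge (C.u C.fzero) m with hgt | hle
    · have hm1 : C.l C.flast < m := by
        have : ¬ (C.u C.fzero < m ∧ m ≤ C.l C.flast) := h1
        omega
      left
      rw [C.sfun_high f hm1, C.sfun_high f (by omega)]
    · have hm1 : m + 1 ≤ C.u C.fzero := by
        by_contra hc
        have hmu : m = C.u C.fzero := by omega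
        have hu1 : C.u C.fzero < C.l C.flast := lt_of_lt_of_le (C.u_lt_l C.fzero)
          (C.l_mono (C.le_flast C.fzero))
        exact h2 ⟨by omega, by omega⟩
      left
      rw [C.sfun_low f hle, C.sfun_low f hm1]


open scoped Classical in
noncomputable def Bof (f : C.Cl → ℝ) : Finset (Fin n) :=
  univ.filter (fun i : Fin n => C.sfun f ((i : ℕ) + 1) = C.sfun f (i : ℕ) + 1)

lemma mem_Bof {f : C.Cl → ℝ} {i : Fin n} :
    i ∈ C.Bof f ↔ C.sfun f ((i : ℕ) + 1) = C.sfun f (i : ℕ) + 1 := by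
  simp [Bof]

lemma pcB (f : C.Cl → ℝ)
    (hmono : ∀ c c' : C.Cl, c.1.1 ≤ c'.1.1 → (c'.1.2 : ℕ) ≤ (c.1.2 : ℕ) → f c ≤ f c')
    (h01 : ∀ c, f c = 0 ∨ f c = 1) :
    ∀ m, (pathCount (C.Bof f) m : ℝ) = C.sfun f m := by
  intro m
  induction m with
  | zero => rw [pathCount_zero, C.sfun_zero]; simp
  | succ m ih =>
      by_cases hmn : m < n
      · rcases C.step01 f hmono h01 m with hs | hs
        · have hnot : ¬ ((⟨m, hmn⟩ : Fin n) ∈ C.Bof f) := by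
            intro hmem
            rw [C.mem_Bof] at hmem
            have hmem' : C.sfun f (m + 1) = C.sfun f m + 1 := hmem
            linarith
          rw [pathCount_succ, dif_pos hmn, if_neg hnot, hs]
          push_cast
          rw [ih]
          ring
        · have hmem : (⟨m, hmn⟩ : Fin n) ∈ C.Bof f := by
            rw [C.mem_Bof]
            exact hs
          rw [pathCount_succ, dif_pos hmn, if_pos hmem, hs]
          push_cast
          rw [ih]
      · rw [pathCount_succ, dif_neg hmn, add_zero, ih,
          C.sfun_high f (by have := C.l_lt_n C.flast; omega),
          C.sfun_high f (by have := C.l_lt_n C.flast; omega)]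

lemma basis_of_01 (M : Matr (Fin n))
    (hbases : ∀ B : Finset (Fin n), M.IsBase B ↔
      (B.card = k ∧ ∀ m : ℕ, pathCount C.SL m ≤ pathCount B m ∧
        pathCount B m ≤ pathCount C.SU m))
    (f : C.Cl → ℝ) (hb : ∀ c, 0 ≤ f c ∧ f c ≤ 1)
    (hmono : ∀ c c' : C.Cl, c.1.1 ≤ c'.1.1 → (c'.1.2 : ℕ) ≤ (c.1.2 : ℕ) → f c ≤ f c')
    (h01 : ∀ c, f c = 0 ∨ f c = 1) :
    M.IsBase (C.Bof f) ∧ C.Tmap (vert (C.Bof f)) = f := by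
  have hpc := C.pcB f hmono h01
  have hcard : (C.Bof f).card = k := by
    have h1 : (pathCount (C.Bof f) n : ℝ) = C.sfun f n := hpc n
    rw [pathCount_all _ (le_refl n), C.sfun_high f (C.l_lt_n C.flast)] at h1
    exact_mod_cast h1
  have hcounts : ∀ m, pathCount C.SL m ≤ pathCount (C.Bof f) m ∧
      pathCount (C.Bof f) m ≤ pathCount C.SU m := by
    intro m
    constructor
    · have hR : (pathCount C.SL m : ℝ) ≤ (pathCount (C.Bof f) m : ℝ) := by
        rw [hpc m, sfun]
        by_cases hm : C.inStrip m
        · rw [dif_pos hm]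
          have := (hb (C.cellOf m hm)).1
          linarith
        · rw [dif_neg hm]
          linarith
      exact_mod_cast hR
    · have hR : (pathCount (C.Bof f) m : ℝ) ≤ (pathCount C.SU m : ℝ) := by
        rw [hpc m, sfun]
        by_cases hm : C.inStrip m
        · rw [dif_pos hm, C.pc_SL_strip m hm, C.pc_SU_strip m hm]
          have := (hb (C.cellOf m hm)).2
          push_cast
          linarith
        · rw [dif_neg hm, add_zero]
          have hle : pathCount C.SL m ≤ pathCount C.SU m := by
            rcases Nat.lt_or_ge (C.u C.fzero) m with hx | hx
            · have hy : C.l C.flast < m := by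
                have hni : ¬ (C.u C.fzero < m ∧ m ≤ C.l C.flast) := hm
                omega
              rw [C.pc_high_SL hy, C.pc_high_SU hy]
            · rw [C.pc_low_SL hx, C.pc_low_SU hx]
          exact_mod_cast hle
      exact_mod_cast hR
  refine ⟨(hbases _).mpr ⟨hcard, hcounts⟩, ?_⟩
  funext c
  rw [C.Tmap_apply, psum_vert, hpc (C.mC c), C.sfun_strip f (C.strip_mC c),
    C.rowOf_mC c (C.strip_mC c), C.cellOf_mC c (C.strip_mC c)]
  ring


open scoped Classical in
noncomputable def clFintype : Fintype C.Cl :=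
  Fintype.ofInjective (fun c : C.Cl => (⟨C.mC c, C.mC_lt_n c⟩ : Fin n))
    (fun a b h => C.mC_inj (by simpa using congrArg Fin.val h))

/-- the order polytope, with the order condition in curried form -/
def Oset : Set (C.Cl → ℝ) :=
  {f | (∀ c, 0 ≤ f c ∧ f c ≤ 1) ∧
    ∀ c c' : C.Cl, c.1.1 ≤ c'.1.1 → (c'.1.2 : ℕ) ≤ (c.1.2 : ℕ) → f c ≤ f c'}

lemma Oset_convex : Convex ℝ C.Oset := by
  rintro f ⟨hfb, hfm⟩ g ⟨hgb, hgm⟩ a b ha hb hab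
  constructor
  · intro c
    have h1 := hfb c
    have h2 := hgb c
    simp only [Pi.add_apply, Pi.smul_apply, smul_eq_mul]
    constructor
    · have := mul_le_mul_of_nonneg_left h1.1 ha
      have := mul_le_mul_of_nonneg_left h2.1 hb
      nlinarith
    · have := mul_le_mul_of_nonneg_left h1.2 ha
      have := mul_le_mul_of_nonneg_left h2.2 hb
      nlinarith
  · intro c c' h1 h2
    have hf := hfm c c' h1 h2
    have hg := hgm c c' h1 h2
    simp only [Pi.add_apply, Pi.smul_apply, smul_eq_mul]
    have := mul_le_mul_of_nonneg_left hf ha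
    have := mul_le_mul_of_nonneg_left hg hb
    linarith

lemma decomp (M : Matr (Fin n))
    (hbases : ∀ B : Finset (Fin n), M.IsBase B ↔
      (B.card = k ∧ ∀ m : ℕ, pathCount C.SL m ≤ pathCount B m ∧
        pathCount B m ≤ pathCount C.SU m)) :
    ∀ f ∈ C.Oset,
      f ∈ convexHull ℝ (⇑C.Tmap '' {x | ∃ B, M.IsBase B ∧ x = vert B}) := by
  classical
  letI : Fintype C.Cl := C.clFintype
  suffices h : ∀ (N : ℕ) (f : C.Cl → ℝ), f ∈ C.Oset →
      (univ.filter (fun c : C.Cl => f c ≠ 0 ∧ f c ≠ 1)).card ≤ N →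
      f ∈ convexHull ℝ (⇑C.Tmap '' {x | ∃ B, M.IsBase B ∧ x = vert B}) by
    intro f hf
    exact h _ f hf (le_refl _)
  have hvertcase : ∀ f : C.Cl → ℝ, f ∈ C.Oset → (∀ c, f c = 0 ∨ f c = 1) →
      f ∈ convexHull ℝ (⇑C.Tmap '' {x | ∃ B, M.IsBase B ∧ x = vert B}) := by
    intro f hf h01
    obtain ⟨hB, hT⟩ := C.basis_of_01 M hbases f hf.1 hf.2 h01
    exact subset_convexHull ℝ _ ⟨vert (C.Bof f), ⟨C.Bof f, hB, rfl⟩, hT⟩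
  intro N
  induction N with
  | zero =>
      intro f hf hcard
      refine hvertcase f hf ?_
      intro c
      by_contra hc
      push_neg at hc
      have : c ∈ univ.filter (fun c : C.Cl => f c ≠ 0 ∧ f c ≠ 1) := by
        simp only [Finset.mem_filter, Finset.mem_univ, true_and]
        exact hc
      have := Finset.card_pos.mpr ⟨c, this⟩
      omega
  | succ N ih =>
      intro f hf hcard
      by_cases h01 : ∀ c, f c = 0 ∨ f c = 1
      · exact hvertcase f hf h01
      · push_neg at h01
        obtain ⟨c0, hc01, hc02⟩ := h01
        have hc0pos : 0 < f c0 := lt_of_le_of_ne (hf.1 c0).1 (Ne.symm hc01)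
        have hPne : ((univ.filter (fun c : C.Cl => 0 < f c)).image f).Nonempty :=
          ⟨f c0, Finset.mem_image_of_mem f (Finset.mem_filter.mpr ⟨Finset.mem_univ _, hc0pos⟩)⟩
        set lam := ((univ.filter (fun c : C.Cl => 0 < f c)).image f).min' hPne with hlam
        obtain ⟨c1, hc1P, hc1⟩ := Finset.mem_image.mp (Finset.min'_mem _ hPne)
        rw [← hlam] at hc1
        have hc1pos : 0 < f c1 := (Finset.mem_filter.mp hc1P).2
        have hlam_pos : 0 < lam := by rw [← hc1]; exact hc1pos
        have hlam_le : ∀ c, 0 < f c → lam ≤ f c := by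
          intro c hc
          exact Finset.min'_le _ _ (Finset.mem_image_of_mem f
            (Finset.mem_filter.mpr ⟨Finset.mem_univ _, hc⟩))
        have hlam_lt1 : lam < 1 :=
          lt_of_le_of_lt (hlam_le c0 hc0pos) (lt_of_le_of_ne (hf.1 c0).2 hc02)
        have hne : (1 : ℝ) - lam ≠ 0 := by linarith
        set g : C.Cl → ℝ := fun c => if 0 < f c then (1 : ℝ) else 0 with hgdef
        have hg01 : ∀ c, g c = 0 ∨ g c = 1 := by
          intro c
          rw [hgdef]
          dsimp only
          split_ifs <;> simp
        have hgb : ∀ c, 0 ≤ g c ∧ g c ≤ 1 := by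
          intro c
          rw [hgdef]
          dsimp only
          split_ifs <;> norm_num
        have hgmono : ∀ c c' : C.Cl, c.1.1 ≤ c'.1.1 → (c'.1.2 : ℕ) ≤ (c.1.2 : ℕ) →
            g c ≤ g c' := by
          intro c c' h1 h2
          have hle := hf.2 c c' h1 h2
          rw [hgdef]
          dsimp only
          split_ifs with hA hB
          · exact le_refl _
          · exact absurd (lt_of_lt_of_le hA hle) hB
          · norm_num
          · exact le_refl _
        have hgO : g ∈ C.Oset := ⟨hgb, hgmono⟩
        have hghull : g ∈ convexHull ℝ (⇑C.Tmap '' {x | ∃ B, M.IsBase B ∧ x = vert B}) :=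
          hvertcase g hgO hg01
        set f' : C.Cl → ℝ := fun c => (f c - lam * g c) / (1 - lam) with hf'def
        have hf'0 : ∀ c, ¬ 0 < f c → f' c = 0 := by
          intro c hc
          have hfc : f c = 0 := le_antisymm (not_lt.mp hc) (hf.1 c).1
          rw [hf'def]
          dsimp only
          rw [hgdef]
          dsimp only
          rw [if_neg hc, hfc]
          simp
        have hf'pos : ∀ c, 0 < f c → f' c = (f c - lam) / (1 - lam) := by
          intro c hc
          rw [hf'def]
          dsimp only
          rw [hgdef]
          dsimp only
          rw [if_pos hc, mul_one]
        have hf'b : ∀ c, 0 ≤ f' c ∧ f' c ≤ 1 := by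
          intro c
          by_cases hc : 0 < f c
          · rw [hf'pos c hc]
            constructor
            · apply div_nonneg
              · have := hlam_le c hc
                linarith
              · linarith
            · rw [div_le_one (by linarith)]
              have := (hf.1 c).2
              linarith
          · rw [hf'0 c hc]
            norm_num
        have hf'mono : ∀ c c' : C.Cl, c.1.1 ≤ c'.1.1 → (c'.1.2 : ℕ) ≤ (c.1.2 : ℕ) →
            f' c ≤ f' c' := by
          intro c c' h1 h2
          have hle := hf.2 c c' h1 h2
          by_cases hc : 0 < f c
          · have hc' : 0 < f c' := lt_of_lt_of_le hc hle
            rw [hf'pos c hc, hf'pos c' hc']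
            exact div_le_div_of_nonneg_right (by linarith) (by linarith)
          · rw [hf'0 c hc]
            exact (hf'b c').1
        have hf'O : f' ∈ C.Oset := ⟨hf'b, hf'mono⟩
        have hsub : univ.filter (fun c : C.Cl => f' c ≠ 0 ∧ f' c ≠ 1)
            ⊆ univ.filter (fun c : C.Cl => f c ≠ 0 ∧ f c ≠ 1) := by
          intro c hc
          simp only [Finset.mem_filter, Finset.mem_univ, true_and] at hc ⊢
          constructor
          · intro hfc
            exact hc.1 (hf'0 c (by rw [hfc]; exact lt_irrefl 0))
          · intro hfc
            have hpos : 0 < f c := by rw [hfc]; norm_num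
            have : f' c = 1 := by
              rw [hf'pos c hpos, hfc]
              exact div_self hne
            exact hc.2 this
        have hc1mem : c1 ∈ univ.filter (fun c : C.Cl => f c ≠ 0 ∧ f c ≠ 1) := by
          simp only [Finset.mem_filter, Finset.mem_univ, true_and]
          constructor
          · intro h
            rw [h] at hc1pos
            exact lt_irrefl 0 hc1pos
          · intro h
            rw [h] at hc1
            rw [← hc1] at hlam_lt1
            exact lt_irrefl 1 hlam_lt1
        have hc1not : c1 ∉ univ.filter (fun c : C.Cl => f' c ≠ 0 ∧ f' c ≠ 1) := by
          simp only [Finset.mem_filter, Finset.mem_univ, true_and, not_and]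
          intro h
          exfalso
          apply h
          rw [hf'pos c1 hc1pos, hc1]
          simp
        have hcard' : (univ.filter (fun c : C.Cl => f' c ≠ 0 ∧ f' c ≠ 1)).card ≤ N := by
          have hss : univ.filter (fun c : C.Cl => f' c ≠ 0 ∧ f' c ≠ 1)
              ⊂ univ.filter (fun c : C.Cl => f c ≠ 0 ∧ f c ≠ 1) :=
            ⟨hsub, fun hcon => hc1not (hcon hc1mem)⟩
          have := Finset.card_lt_card hss
          omega
        have hf'hull := ih f' hf'O hcard'
        have hcomb : f = lam • g + (1 - lam) • f' := by
          funext c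
          simp only [Pi.add_apply, Pi.smul_apply, smul_eq_mul]
          by_cases hc : 0 < f c
          · rw [hf'pos c hc, hgdef]
            dsimp only
            rw [if_pos hc]
            field_simp
            ring
          · have hfc : f c = 0 := le_antisymm (not_lt.mp hc) (hf.1 c).1
            rw [hf'0 c hc, hgdef]
            dsimp only
            rw [if_neg hc, hfc]
            ring
        rw [hcomb]
        exact (convex_convexHull ℝ _) hghull hf'hull (le_of_lt hlam_pos)
          (by linarith) (by ring)


lemma image_eq (M : Matr (Fin n))
    (hbases : ∀ B : Finset (Fin n), M.IsBase B ↔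
      (B.card = k ∧ ∀ m : ℕ, pathCount C.SL m ≤ pathCount B m ∧
        pathCount B m ≤ pathCount C.SU m)) :
    ⇑C.Tmap '' convexHull ℝ {x : Fin n → ℝ | ∃ B, M.IsBase B ∧ x = vert B} = C.Oset := by
  rw [AffineMap.image_convexHull]
  apply Set.Subset.antisymm
  · apply convexHull_min ?_ C.Oset_convex
    rintro y ⟨x, ⟨B, hB, rfl⟩, rfl⟩
    exact ⟨fun c => C.vert_T_bounds M hbases hB c,
      fun c c' h1 h2 => C.Tmono (vert B) (vert_nonneg B) (vert_le_one B) h1 h2⟩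
  · intro f hf
    exact C.decomp M hbases f hf

lemma span_props (M : Matr (Fin n))
    (hbases : ∀ B : Finset (Fin n), M.IsBase B ↔
      (B.card = k ∧ ∀ m : ℕ, pathCount C.SL m ≤ pathCount B m ∧
        pathCount B m ≤ pathCount C.SU m)) :
    ∀ x ∈ affineSpan ℝ (convexHull ℝ {x : Fin n → ℝ | ∃ B, M.IsBase B ∧ x = vert B}),
      (∀ i : Fin n, ((i : ℕ) < C.u C.fzero ∨ C.l C.flast < (i : ℕ)) → x i = 0) ∧
        ∑ i, x i = (k : ℝ) := by
  intro x hx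
  rw [affineSpan_convexHull] at hx
  refine affineSpan_induction (p := fun y : Fin n → ℝ =>
      (∀ i : Fin n, ((i : ℕ) < C.u C.fzero ∨ C.l C.flast < (i : ℕ)) → y i = 0) ∧
        ∑ i, y i = (k : ℝ)) hx ?_ ?_
  · rintro y ⟨B, hB, rfl⟩
    exact ⟨C.vert_zero_outside M hbases hB, C.vert_sum M hbases hB⟩
  · rintro a u v w ⟨hu1, hu2⟩ ⟨hv1, hv2⟩ ⟨hw1, hw2⟩
    constructor
    · intro i hi
      show a • (u - v) i + w i = 0
      simp only [Pi.sub_apply, smul_eq_mul]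
      rw [hu1 i hi, hv1 i hi, hw1 i hi]
      ring
    · show ∑ i, (a • (u - v) + w) i = (k : ℝ)
      simp only [Pi.add_apply, Pi.smul_apply, Pi.sub_apply, smul_eq_mul]
      rw [Finset.sum_add_distrib, ← Finset.mul_sum, Finset.sum_sub_distrib, hu2, hv2, hw2]
      ring

lemma main (M : Matr (Fin n))
    (hbases : ∀ B : Finset (Fin n), M.IsBase B ↔
      (B.card = k ∧ ∀ m : ℕ, pathCount C.SL m ≤ pathCount B m ∧
        pathCount B m ≤ pathCount C.SU m)) :
    Set.BijOn C.Tmap (basePolytope M) (cellOrderPolytope n k C.SL C.SU C.hL C.hU) ∧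
    Set.BijOn C.Tmap
      {x | x ∈ affineSpan ℝ (basePolytope M) ∧ ∀ i, ∃ z : ℤ, x i = (z : ℝ)}
      {y | y ∈ affineSpan ℝ (cellOrderPolytope n k C.SL C.SU C.hL C.hU) ∧
        ∀ c, ∃ z : ℤ, y c = (z : ℝ)} := by
  have hOeq : cellOrderPolytope n k C.SL C.SU C.hL C.hU = C.Oset := by
    ext f
    constructor
    · rintro ⟨hb, hm⟩
      exact ⟨hb, fun c c' h1 h2 => hm c c' ⟨h1, h2⟩⟩
    · rintro ⟨hb, hm⟩
      exact ⟨hb, fun c c' hcc => hm c c' hcc.1 hcc.2⟩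
  have hPeq : basePolytope M
      = convexHull ℝ {x : Fin n → ℝ | ∃ B, M.IsBase B ∧ x = vert B} := rfl
  have himg : ⇑C.Tmap '' basePolytope M = cellOrderPolytope n k C.SL C.SU C.hL C.hU := by
    rw [hOeq, hPeq, C.image_eq M hbases]
  have hspan : ∀ x ∈ affineSpan ℝ (basePolytope M),
      (∀ i : Fin n, ((i : ℕ) < C.u C.fzero ∨ C.l C.flast < (i : ℕ)) → x i = 0) ∧
        ∑ i, x i = (k : ℝ) := by
    intro x hx
    exact C.span_props M hbases x (by rw [← hPeq]; exact hx)
  have hUT : ∀ x ∈ affineSpan ℝ (basePolytope M), C.Umap (C.Tmap x) = x := by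
    intro x hx
    exact C.UT x (hspan x hx).1 (hspan x hx).2
  have hspan_eq : affineSpan ℝ (cellOrderPolytope n k C.SL C.SU C.hL C.hU)
      = (affineSpan ℝ (basePolytope M)).map C.Tmap := by
    rw [AffineSubspace.map_span, himg]
    rfl
  constructor
  · refine ⟨?_, ?_, ?_⟩
    · intro x hx
      rw [← himg]
      exact ⟨x, hx, rfl⟩
    · intro x hx x' hx' h
      have h1 := hUT x (subset_affineSpan ℝ _ hx)
      have h2 := hUT x' (subset_affineSpan ℝ _ hx')
      rw [← h1, ← h2, h]
    · intro y hy
      rw [← himg] at hy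
      exact hy
  · refine ⟨?_, ?_, ?_⟩
    · rintro x ⟨hx1, hx2⟩
      constructor
      · rw [hspan_eq]
        exact AffineSubspace.mem_map.2 ⟨x, hx1, rfl⟩
      · intro c
        choose z hz using hx2
        refine ⟨(∑ i ∈ univ.filter (fun i : Fin n => (i : ℕ) < C.mC c), z i)
          - ((c.1.2 : ℕ) : ℤ), ?_⟩
        rw [C.Tmap_apply, psum, Finset.sum_congr rfl (fun i _ => hz i)]
        push_cast
        ring
    · rintro x ⟨hx1, _⟩ x' ⟨hx1', _⟩ h
      have h1 := hUT x hx1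
      have h2 := hUT x' hx1'
      rw [← h1, ← h2, h]
    · rintro y ⟨hy1, hy2⟩
      rw [hspan_eq] at hy1
      obtain ⟨x0, hx0, hx0y⟩ := AffineSubspace.mem_map.1 hy1
      have hUyx0 : C.Umap y = x0 := by
        rw [← hx0y, hUT x0 hx0]
      refine ⟨C.Umap y, ⟨?_, ?_⟩, ?_⟩
      · rw [hUyx0]
        exact hx0
      · intro i
        choose z hz using hy2
        have hsf : ∀ m : ℕ, ∃ w : ℤ, C.sfun y m = (w : ℝ) := by
          intro m
          by_cases hm : C.inStrip m
          · refine ⟨(pathCount C.SL m : ℤ) + z (C.cellOf m hm), ?_⟩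
            rw [sfun, dif_pos hm, hz]
            push_cast
            ring
          · refine ⟨(pathCount C.SL m : ℤ), ?_⟩
            rw [sfun, dif_neg hm]
            push_cast
            ring
        obtain ⟨w1, hw1⟩ := hsf ((i : ℕ) + 1)
        obtain ⟨w2, hw2⟩ := hsf (i : ℕ)
        refine ⟨w1 - w2, ?_⟩
        rw [C.Umap_apply, hw1, hw2]
        push_cast
        ring
      · rw [C.TU y]

end Ctx
end SnakeProof

/-- **Snake matroid polytopes are order polytopes of fences.** The base polytope of
a snake matroid is integrally equivalent, via a lattice-point-preserving affine
transformation, to the order polytope of the cell poset of its border-strip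
skew-shape representation. -/
theorem snake_basePolytope_integrallyEquiv_orderPolytope
    (n k : ℕ) (hk : 1 ≤ k) (hkn : k + 1 ≤ n)
    (SL SU : Finset (Fin n)) (hL : SL.card = k) (hU : SU.card = k)
    (hdom : ∀ m : ℕ, pathCount SL m ≤ pathCount SU m)
    (hrows : ∀ r : Fin k, ((SU.orderEmbOfFin hU) r : ℕ) < ((SL.orderEmbOfFin hL) r : ℕ))
    (hstrip : ∀ (r : Fin k) (h : (r : ℕ) + 1 < k),
      ((SL.orderEmbOfFin hL) r : ℕ) = ((SU.orderEmbOfFin hU) ⟨(r : ℕ) + 1, h⟩ : ℕ))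
    (M : Matr (Fin n)) (hE : M.E = Finset.univ)
    (hbases : ∀ B : Finset (Fin n), M.IsBase B ↔
      (B.card = k ∧ ∀ m : ℕ, pathCount SL m ≤ pathCount B m ∧
        pathCount B m ≤ pathCount SU m)) :
    ∃ T : (Fin n → ℝ) →ᵃ[ℝ] (Cells n k SL SU hL hU → ℝ),
      Set.BijOn T (basePolytope M) (cellOrderPolytope n k SL SU hL hU) ∧
      Set.BijOn T
        {x | x ∈ affineSpan ℝ (basePolytope M) ∧ ∀ i, ∃ z : ℤ, x i = (z : ℝ)}
        {y | y ∈ affineSpan ℝ (cellOrderPolytope n k SL SU hL hU) ∧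
          ∀ c, ∃ z : ℤ, y c = (z : ℝ)} := by
  exact ⟨_, SnakeProof.Ctx.main ⟨SL, SU, hL, hU, hk, hrows, hstrip⟩ M hbases⟩
end

section
/- A lattice-path matroid M[L,U] is connected if and only if the bounding paths L and U intersect only at the endpoints (0,0) and (n-k,k). -/
open Finset Pointwise

/-! ### Auxiliary lemmas about abstract matroid rank functions -/

namespace Matr

variable {α : Type} [DecidableEq α]

lemma rk_le_card' (M : Matr α) (A : Finset α) : M.rk A ≤ A.card := by
  calc M.rk A = M.rk (A ∩ M.E) := (M.rk_inter A).symm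
    _ ≤ (A ∩ M.E).card := M.rk_le_card _ (inter_subset_right)
    _ ≤ A.card := card_le_card inter_subset_left

lemma rk_union_le (M : Matr α) (A B : Finset α) : M.rk (A ∪ B) ≤ M.rk A + M.rk B := by
  have := M.rk_submod A B
  omega

/-- Subsets of independent sets are independent. -/
lemma indep_subset (M : Matr α) {B X : Finset α} (hB : M.rk B = B.card) (hX : X ⊆ B) :
    M.rk X = X.card := by
  have h1 : M.rk B ≤ M.rk X + M.rk (B \ X) := by
    have := M.rk_union_le X (B \ X)
    rwa [Finset.union_sdiff_of_subset hX] at this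
  have h2 : M.rk (B \ X) ≤ (B \ X).card := M.rk_le_card' _
  have h3 : (B \ X).card + X.card = B.card := by
    rw [Finset.card_sdiff_add_card_eq_card hX]
  have h4 : M.rk X ≤ X.card := M.rk_le_card' _
  omega

/-- If no element of `A` increases the rank of `I`, then `I ∪ A` has the same rank as `I`. -/
lemma rk_union_eq_self (M : Matr α) (I : Finset α) (A : Finset α)
    (h : ∀ x ∈ A, M.rk (insert x I) ≤ M.rk I) : M.rk (I ∪ A) = M.rk I := by
  induction A using Finset.induction_on with
  | empty => rw [union_empty]
  | @insert x A hx ih =>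
      have hset : I ∪ insert x A = (I ∪ A) ∪ insert x I := by
        ext y; simp only [mem_union, mem_insert]; tauto
      have hih : M.rk (I ∪ A) = M.rk I := ih (fun y hy => h y (mem_insert_of_mem hy))
      have hsub := M.rk_submod (I ∪ A) (insert x I)
      have hge : M.rk I ≤ M.rk ((I ∪ A) ∩ insert x I) := by
        apply M.rk_mono
        intro y hy
        simp only [mem_inter, mem_union, mem_insert]
        tauto
      have hx' : M.rk (insert x I) ≤ M.rk I := h x (mem_insert_self x A)
      have hmono : M.rk I ≤ M.rk (I ∪ insert x A) := M.rk_mono subset_union_left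
      rw [hset] at hmono ⊢
      rw [hih] at hsub
      omega

/-- Every independent subset of `A` extends to an independent set attaining `rk A`. -/
lemma exists_max_indep (M : Matr α) (A I₀ : Finset α) (hI₀A : I₀ ⊆ A)
    (hind : M.rk I₀ = I₀.card) :
    ∃ I, I₀ ⊆ I ∧ I ⊆ A ∧ M.rk I = I.card ∧ M.rk A = I.card := by
  classical
  set T := A.powerset.filter (fun J => I₀ ⊆ J ∧ M.rk J = J.card) with hT
  have hne : T.Nonempty := ⟨I₀, by simp [hT, hI₀A, hind]⟩
  obtain ⟨I, hIT, hImax⟩ := T.exists_max_image Finset.card hne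
  simp only [hT, mem_filter, mem_powerset] at hIT
  obtain ⟨hIA, hI₀I, hIind⟩ := hIT
  refine ⟨I, hI₀I, hIA, hIind, ?_⟩
  have hAI : A = I ∪ A := (union_eq_right.mpr hIA).symm
  have : M.rk (I ∪ A) = M.rk I := by
    apply M.rk_union_eq_self
    intro x hxA
    by_cases hxI : x ∈ I
    · rw [insert_eq_self.mpr hxI]
    · have hle : M.rk (insert x I) ≤ M.rk I + 1 := by
        have h1 : M.rk (insert x I) ≤ M.rk {x} + M.rk I := by
          have := M.rk_union_le {x} I
          rwa [← insert_eq] at this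
        have h2 : M.rk {x} ≤ 1 := by
          simpa using M.rk_le_card' {x}
        omega
      have hge : M.rk I ≤ M.rk (insert x I) := M.rk_mono (subset_insert x I)
      by_contra hcon
      have heq : M.rk (insert x I) = I.card + 1 := by omega
      have hcard : (insert x I).card = I.card + 1 := card_insert_of_notMem hxI
      have : insert x I ∈ T := by
        simp only [hT, mem_filter, mem_powerset]
        exact ⟨insert_subset hxA hIA, hI₀I.trans (subset_insert x I), by omega⟩
      have := hImax _ this
      omega
  rw [hAI, this, hIind]

lemma exists_base_inter (M : Matr α) (A : Finset α) (hA : A ⊆ M.E) :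
    ∃ B, M.IsBase B ∧ M.rk A = (A ∩ B).card := by
  obtain ⟨I, -, hIA, hIind, hrkA⟩ := M.exists_max_indep A ∅ (empty_subset A)
    (by simp [M.rk_empty])
  obtain ⟨B, hIB, hBE, hBind, hrkE⟩ := M.exists_max_indep M.E I (hIA.trans hA) hIind
  refine ⟨B, ⟨hBE, by omega, hBind⟩, ?_⟩
  have h1 : I ⊆ A ∩ B := subset_inter hIA hIB
  have h2 : (A ∩ B).card ≤ M.rk A := by
    have := M.indep_subset hBind (inter_subset_right : A ∩ _ ⊆ _)
    rw [← this]
    exact M.rk_mono inter_subset_left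
  have h3 : I.card ≤ (A ∩ B).card := card_le_card h1
  omega

lemma card_inter_le_rk (M : Matr α) {B : Finset α} (hB : M.rk B = B.card) (A : Finset α) :
    (A ∩ B).card ≤ M.rk A := by
  have := M.indep_subset hB (inter_subset_right : A ∩ _ ⊆ _)
  rw [← this]
  exact M.rk_mono inter_subset_left

end Matr

/-! ### Auxiliary lemmas about `pathCount` -/

section PC
variable {n : ℕ} (S : Finset (Fin n))

lemma pc_zero : pathCount S 0 = 0 := by simp [pathCount]

lemma pc_mono {m m' : ℕ} (h : m ≤ m') : pathCount S m ≤ pathCount S m' := by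
  apply card_le_card
  intro i hi
  simp only [mem_filter] at hi ⊢
  exact ⟨hi.1, by omega⟩

lemma pc_succ_le (m : ℕ) : pathCount S (m + 1) ≤ pathCount S m + 1 := by
  have hsub : S.filter (fun i : Fin n => (i : ℕ) < m + 1) ⊆
      S.filter (fun i : Fin n => (i : ℕ) < m) ∪ S.filter (fun i : Fin n => (i : ℕ) = m) := by
    intro i hi
    simp only [mem_filter] at hi
    simp only [mem_union, mem_filter]
    rcases Nat.lt_succ_iff_lt_or_eq.mp hi.2 with h | h
    · exact Or.inl ⟨hi.1, h⟩
    · exact Or.inr ⟨hi.1, h⟩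
  have hcard1 : (S.filter (fun i : Fin n => (i : ℕ) = m)).card ≤ 1 := by
    apply card_le_one.mpr
    intro a ha b hb
    simp only [mem_filter] at ha hb
    exact Fin.ext (by omega)
  calc pathCount S (m+1) ≤ _ := card_le_card hsub
    _ ≤ _ + _ := card_union_le _ _
    _ ≤ pathCount S m + 1 := by exact Nat.add_le_add_left hcard1 _

lemma pc_le (m : ℕ) : pathCount S m ≤ m := by
  induction m with
  | zero => simp [pc_zero]
  | succ m ih => have := pc_succ_le S m; omega

lemma pc_lipschitz (m d : ℕ) : pathCount S (m + d) ≤ pathCount S m + d := by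
  induction d with
  | zero => simp
  | succ d ih =>
      have h1 : m + (d + 1) = (m + d) + 1 := rfl
      rw [h1]
      have := pc_succ_le S (m + d); omega

lemma pc_eq_card {m : ℕ} (h : n ≤ m) : pathCount S m = S.card := by
  unfold pathCount
  rw [filter_true_of_mem]
  intro i _
  have := i.isLt
  omega

/-- Path determined by a step function. -/
lemma pc_of_step (f : ℕ → ℕ) (hf0 : f 0 = 0)
    (hstep : ∀ m, f (m + 1) = f m ∨ f (m + 1) = f m + 1) :
    ∀ m ≤ n, pathCount (univ.filter (fun i : Fin n => f ((i : ℕ) + 1) = f (i : ℕ) + 1)) m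
      = f m := by
  set B := univ.filter (fun i : Fin n => f ((i : ℕ) + 1) = f (i : ℕ) + 1) with hB
  intro m
  induction m with
  | zero => intro _; simp [pc_zero, hf0]
  | succ m ih =>
      intro hm
      have hmn : m < n := hm
      have ihm := ih (le_of_lt hmn)
      have hsplit : B.filter (fun i : Fin n => (i : ℕ) < m + 1)
          = B.filter (fun i : Fin n => (i : ℕ) < m) ∪
            B.filter (fun i : Fin n => (i : ℕ) = m) := by
        ext i
        simp only [mem_filter, mem_union, ← and_or_left, and_congr_right_iff]
        intro _
        omega
      have hdisj : Disjoint (B.filter (fun i : Fin n => (i : ℕ) < m))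
          (B.filter (fun i : Fin n => (i : ℕ) = m)) := by
        apply disjoint_filter_filter'
        exact disjoint_iff_inf_le.mpr (fun i hi => by simp at hi; omega)
      have hlast : (B.filter (fun i : Fin n => (i : ℕ) = m)).card
          = if f (m + 1) = f m + 1 then 1 else 0 := by
        by_cases h : f (m + 1) = f m + 1
        · rw [if_pos h]
          rw [card_eq_one]
          refine ⟨⟨m, hmn⟩, ?_⟩
          ext i
          simp only [mem_filter, mem_singleton, hB, mem_univ, true_and]
          constructor
          · rintro ⟨_, h2⟩; exact Fin.ext h2
          · rintro rfl; exact ⟨by simpa using h, rfl⟩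
        · rw [if_neg h, card_eq_zero]
          ext i
          simp only [mem_filter, hB, mem_univ, true_and, notMem_empty, iff_false, not_and]
          intro h1 h2
          rw [h2] at h1
          exact h h1
      have : pathCount B (m + 1) = pathCount B m +
          (if f (m + 1) = f m + 1 then 1 else 0) := by
        unfold pathCount
        rw [hsplit, card_union_of_disjoint hdisj, hlast]
      rw [this, ihm]
      rcases hstep m with h | h
      · rw [if_neg (by omega)]; omega
      · rw [if_pos h]; omega

lemma pc_union_disjoint {X Y : Finset (Fin n)} (h : Disjoint X Y) (m : ℕ) :
    pathCount (X ∪ Y) m = pathCount X m + pathCount Y m := by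
  unfold pathCount
  rw [filter_union, card_union_of_disjoint (disjoint_filter_filter h)]

lemma pc_inter_lt_of_le (X : Finset (Fin n)) {m m₀ : ℕ} (h : m ≤ m₀) :
    pathCount (X ∩ univ.filter (fun i : Fin n => (i : ℕ) < m₀)) m = pathCount X m := by
  unfold pathCount
  congr 1
  ext i
  simp only [mem_filter, mem_inter, mem_univ, true_and]
  constructor
  · rintro ⟨⟨h1, _⟩, h3⟩; exact ⟨h1, h3⟩
  · rintro ⟨h1, h3⟩; exact ⟨⟨h1, by omega⟩, h3⟩

lemma pc_inter_lt_of_ge (X : Finset (Fin n)) {m m₀ : ℕ} (h : m₀ ≤ m) :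
    pathCount (X ∩ univ.filter (fun i : Fin n => (i : ℕ) < m₀)) m = pathCount X m₀ := by
  unfold pathCount
  congr 1
  ext i
  simp only [mem_filter, mem_inter, mem_univ, true_and]
  constructor
  · rintro ⟨⟨h1, h2⟩, _⟩; exact ⟨h1, h2⟩
  · rintro ⟨h1, h2⟩; exact ⟨⟨h1, h2⟩, by omega⟩

lemma pc_inter_ge_of_le (X : Finset (Fin n)) {m m₀ : ℕ} (h : m ≤ m₀) :
    pathCount (X ∩ univ.filter (fun i : Fin n => ¬ (i : ℕ) < m₀)) m = 0 := by
  unfold pathCount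
  rw [card_eq_zero, eq_empty_iff_forall_notMem]
  intro i hi
  simp only [mem_filter, mem_inter, mem_univ, true_and] at hi
  omega

lemma pc_inter_ge_of_ge (X : Finset (Fin n)) {m m₀ : ℕ} (h : m₀ ≤ m) :
    pathCount (X ∩ univ.filter (fun i : Fin n => ¬ (i : ℕ) < m₀)) m
      = pathCount X m - pathCount X m₀ := by
  unfold pathCount
  have hset : (X ∩ univ.filter (fun i : Fin n => ¬ (i : ℕ) < m₀)).filter
        (fun i : Fin n => (i : ℕ) < m)
      = X.filter (fun i : Fin n => (i : ℕ) < m) \ X.filter (fun i : Fin n => (i : ℕ) < m₀) := by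
    ext i
    simp only [mem_filter, mem_inter, mem_univ, true_and, mem_sdiff, not_and]
    constructor
    · rintro ⟨⟨h1, h2⟩, h3⟩; exact ⟨⟨h1, h3⟩, fun _ => h2⟩
    · rintro ⟨⟨h1, h2⟩, h3⟩; exact ⟨⟨h1, h3 h1⟩, h2⟩
  rw [hset, card_sdiff_of_subset]
  intro i hi
  simp only [mem_filter] at hi ⊢
  exact ⟨hi.1, by omega⟩

end PC

/-- **Connectivity of lattice-path matroids.** The lattice-path matroid `M[L,U]` is
connected if and only if the bounding paths `L` and `U` meet only at the two
endpoints, i.e. `|s(L) ∩ [m]| < |s(U) ∩ [m]|` for all `0 < m < n`. -/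
theorem latticePathMatroid_connected_iff (n k : ℕ)
    (SL SU : Finset (Fin n)) (hL : SL.card = k) (hU : SU.card = k)
    (hdom : ∀ m : ℕ, pathCount SL m ≤ pathCount SU m)
    (M : Matr (Fin n)) (hE : M.E = Finset.univ)
    (hbases : ∀ B : Finset (Fin n), M.IsBase B ↔
      (B.card = k ∧ ∀ m : ℕ, pathCount SL m ≤ pathCount B m ∧
        pathCount B m ≤ pathCount SU m)) :
    ¬ M.IsDisconnected ↔
      ∀ m : ℕ, 0 < m → m < n → pathCount SL m < pathCount SU m := by
  have hSLbase : M.IsBase SL := (hbases SL).mpr ⟨hL, fun m => ⟨le_refl _, hdom m⟩⟩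
  have hrkE : M.rk M.E = k := by
    have := hSLbase.2.1
    omega
  constructor
  · -- connected → strict domination, by contraposition
    intro hnd m₀ hm0 hmn
    by_contra hcon
    have heq : pathCount SL m₀ = pathCount SU m₀ := le_antisymm (hdom m₀) (by omega)
    set c := pathCount SL m₀ with hc
    apply hnd
    set E₁ : Finset (Fin n) := univ.filter (fun i : Fin n => (i : ℕ) < m₀) with hE₁
    set E₂ : Finset (Fin n) := univ.filter (fun i : Fin n => ¬ (i : ℕ) < m₀) with hE₂
    have hdisjE : Disjoint E₁ E₂ := by
      rw [disjoint_left]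
      intro i h1 h2
      simp only [hE₁, hE₂, mem_filter, mem_univ, true_and] at h1 h2
      exact h2 h1
    have hkey : ∀ B', M.IsBase B' → pathCount B' m₀ = c := by
      intro B' hB'
      have h := ((hbases B').mp hB').2 m₀
      omega
    refine ⟨E₁, E₂, ?_, hdisjE, ⟨⟨0, by omega⟩, ?_⟩, ⟨⟨m₀, hmn⟩, ?_⟩, ?_⟩
    · rw [hE]
      ext i
      simp only [hE₁, hE₂, mem_union, mem_filter, mem_univ, true_and]
      tauto
    · simp only [hE₁, mem_filter, mem_univ, true_and]
      simpa using hm0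
    · simp only [hE₂, mem_filter, mem_univ, true_and]
      simp
    · intro A hA
      -- the `≤` direction by submodularity
      have hA12 : (A ∩ E₁) ∪ (A ∩ E₂) = A := by
        ext i
        simp only [mem_union, mem_inter, hE₁, hE₂, mem_filter, mem_univ, true_and]
        by_cases hi : (i : ℕ) < m₀ <;> simp [hi]
      have hle : M.rk A ≤ M.rk (A ∩ E₁) + M.rk (A ∩ E₂) := by
        have := M.rk_union_le (A ∩ E₁) (A ∩ E₂)
        rwa [hA12] at this
      -- the `≥` direction via a mixed basis
      obtain ⟨B₁, hB₁, h1⟩ := M.exists_base_inter (A ∩ E₁) (by rw [hE]; exact subset_univ _)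
      obtain ⟨B₂, hB₂, h2⟩ := M.exists_base_inter (A ∩ E₂) (by rw [hE]; exact subset_univ _)
      have hc1 : pathCount B₁ m₀ = c := hkey B₁ hB₁
      have hc2 : pathCount B₂ m₀ = c := hkey B₂ hB₂
      have hB₁card : B₁.card = k := by have := hB₁.2.1; omega
      have hB₂card : B₂.card = k := by have := hB₂.2.1; omega
      have hB₁E : Disjoint (B₁ ∩ E₁) (B₂ ∩ E₂) :=
        hdisjE.mono inter_subset_right inter_subset_right
      set B : Finset (Fin n) := (B₁ ∩ E₁) ∪ (B₂ ∩ E₂) with hB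
      have hpcB : ∀ m : ℕ, pathCount B m =
          (if m ≤ m₀ then pathCount B₁ m else c + (pathCount B₂ m - c)) := by
        intro m
        rw [hB, pc_union_disjoint hB₁E]
        by_cases hm : m ≤ m₀
        · rw [if_pos hm, hE₁, hE₂, pc_inter_lt_of_le B₁ hm, pc_inter_ge_of_le B₂ hm]
          omega
        · have hm' : m₀ ≤ m := by omega
          rw [if_neg hm, hE₁, hE₂, pc_inter_lt_of_ge B₁ hm', pc_inter_ge_of_ge B₂ hm',
            hc1, hc2]
      have hBbase : M.IsBase B := by
        apply (hbases B).mpr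
        constructor
        · have hn : pathCount B n = k := by
            rw [hpcB n]
            have hck : pathCount B₂ n = k := by rw [pc_eq_card B₂ le_rfl, hB₂card]
            have hcle : c ≤ k := by
              rw [← hck, hc2.symm] at *
              exact pc_mono B₂ (le_of_lt hmn)
            rw [if_neg (by omega), hck]
            omega
          rw [← hn, pc_eq_card B le_rfl]
        · intro m
          rw [hpcB m]
          by_cases hm : m ≤ m₀
          · rw [if_pos hm]
            exact ((hbases B₁).mp hB₁).2 m
          · rw [if_neg hm]
            have hB₂m := ((hbases B₂).mp hB₂).2 m
            have hcm : c ≤ pathCount B₂ m := by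
              rw [← hc2]
              exact pc_mono B₂ (by omega)
            omega
      have hge : M.rk (A ∩ E₁) + M.rk (A ∩ E₂) ≤ M.rk A := by
        have hABsplit : A ∩ B = ((A ∩ E₁) ∩ B₁) ∪ ((A ∩ E₂) ∩ B₂) := by
          rw [hB]
          ext i
          simp only [mem_inter, mem_union]
          tauto
        have hdisj2 : Disjoint ((A ∩ E₁) ∩ B₁) ((A ∩ E₂) ∩ B₂) := by
          apply hdisjE.mono
          · exact (inter_subset_left).trans inter_subset_right
          · exact (inter_subset_left).trans inter_subset_right
        have hcardeq : (A ∩ B).card = ((A ∩ E₁) ∩ B₁).card + ((A ∩ E₂) ∩ B₂).card := by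
          rw [hABsplit, card_union_of_disjoint hdisj2]
        have := M.card_inter_le_rk hBbase.2.2 A
        omega
      omega
  · -- strict domination → connected
    intro hstrict hdisc
    obtain ⟨E₁, E₂, hun, hdisj, hne1, hne2, hadd⟩ := hdisc
    have hE₁sub : E₁ ⊆ M.E := hun ▸ subset_union_left
    have hE₂sub : E₂ ⊆ M.E := hun ▸ subset_union_right
    have hrk_split : M.rk M.E = M.rk E₁ + M.rk E₂ := by
      have h := hadd M.E (subset_refl _)
      rwa [inter_eq_right.mpr hE₁sub, inter_eq_right.mpr hE₂sub] at h
    have hkey : ∀ B, M.IsBase B → (B ∩ E₁).card = M.rk E₁ ∧ (B ∩ E₂).card = M.rk E₂ := by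
      intro B hB
      obtain ⟨hBE, hBcard, hBind⟩ := hB
      have h1 := hadd B hBE
      have h2 : M.rk (B ∩ E₁) = (B ∩ E₁).card := M.indep_subset hBind inter_subset_left
      have h3 : M.rk (B ∩ E₂) = (B ∩ E₂).card := M.indep_subset hBind inter_subset_left
      have h4 : (B ∩ E₁).card + (B ∩ E₂).card = B.card := by
        rw [← card_union_of_disjoint (hdisj.mono inter_subset_right inter_subset_right)]
        congr 1
        rw [← inter_union_distrib_left, hun, inter_eq_left.mpr hBE]
      have h5 : M.rk (B ∩ E₁) ≤ M.rk E₁ := M.rk_mono inter_subset_right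
      have h6 : M.rk (B ∩ E₂) ≤ M.rk E₂ := M.rk_mono inter_subset_right
      omega
    -- find an adjacent pair on different sides of the partition
    have h0n : 0 < n := by
      obtain ⟨x, _⟩ := hne1
      exact x.pos
    have hflip : ∃ a : ℕ, ∃ h : a + 1 < n,
        ¬ (((⟨a, Nat.lt_of_succ_lt h⟩ : Fin n) ∈ E₁) ↔ ((⟨a + 1, h⟩ : Fin n) ∈ E₁)) := by
      by_contra hno
      push_neg at hno
      have hall : ∀ j : ℕ, ∀ hj : j < n, (((⟨j, hj⟩ : Fin n) ∈ E₁) ↔ ((⟨0, h0n⟩ : Fin n) ∈ E₁)) := by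
        intro j
        induction j with
        | zero => intro hj; rfl
        | succ j ih =>
            intro hj
            have h1 := hno j hj
            have h2 := ih (Nat.lt_of_succ_lt hj)
            exact (h1.symm).trans h2
      by_cases h0 : (⟨0, h0n⟩ : Fin n) ∈ E₁
      · obtain ⟨y, hy⟩ := hne2
        have : y ∈ E₁ := by
          have := (hall y.1 y.2).mpr h0
          simpa using this
        exact (disjoint_left.mp hdisj this) hy
      · obtain ⟨x, hx⟩ := hne1
        apply h0
        have := (hall x.1 x.2).mp (by simpa using hx)
        exact this
    obtain ⟨a, han, hflip⟩ := hflip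
    have han' : a < n := Nat.lt_of_succ_lt han
    set xa : Fin n := ⟨a, han'⟩ with hxa
    set xb : Fin n := ⟨a + 1, han⟩ with hxb
    -- construct the two swap bases
    set s := pathCount SL (a + 1) with hs
    set u := pathCount SU (a + 1) with hu
    have hsu : s < u := hstrict (a + 1) (Nat.succ_pos a) han
    set f : ℕ → ℕ := fun m => max (pathCount SL m) (u - ((a + 1) - m)) with hf
    have hf0 : f 0 = 0 := by
      have h1 : pathCount SL 0 = 0 := pc_zero SL
      have h2 : u ≤ a + 1 := pc_le SU (a + 1)
      simp only [hf]
      omega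
    have hfstep : ∀ m, f (m + 1) = f m ∨ f (m + 1) = f m + 1 := by
      intro m
      have h1 : pathCount SL m ≤ pathCount SL (m + 1) := pc_mono SL (Nat.le_succ m)
      have h2 : pathCount SL (m + 1) ≤ pathCount SL m + 1 := pc_succ_le SL m
      simp only [hf]
      omega
    have hfub : ∀ m, f m ≤ pathCount SU m := by
      intro m
      have h1 : pathCount SL m ≤ pathCount SU m := hdom m
      rcases le_total m (a + 1) with hm | hm
      · have h2 : pathCount SU (m + ((a + 1) - m)) ≤ pathCount SU m + ((a + 1) - m) :=
          pc_lipschitz SU m _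
        have h3 : m + ((a + 1) - m) = a + 1 := by omega
        rw [h3] at h2
        simp only [hf]
        omega
      · have h2 : u ≤ pathCount SU m := by
          rw [hu]; exact pc_mono SU hm
        simp only [hf]
        omega
    have hfa : f a = u - 1 := by
      have h1 : pathCount SL a ≤ s := by rw [hs]; exact pc_mono SL (Nat.le_succ a)
      simp only [hf]
      omega
    have hfb : f (a + 1) = u := by
      simp only [hf]
      omega
    have hfc : f (a + 2) = u := by
      have h1 : pathCount SL (a + 2) ≤ s + 1 := by rw [hs]; exact pc_succ_le SL (a + 1)
      simp only [hf]
      omega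
    have hfn : f n = k := by
      have h1 : pathCount SL n = k := by rw [pc_eq_card SL le_rfl, hL]
      have h2 : u ≤ k := by
        rw [hu, ← hU, ← pc_eq_card SU le_rfl]
        exact pc_mono SU (le_of_lt han)
      simp only [hf]
      omega
    set g : ℕ → ℕ := fun m => if m = a + 1 then u - 1 else f m with hg
    have hg0 : g 0 = 0 := by
      simp only [hg]
      rw [if_neg (by omega)]
      exact hf0
    have hg_eq : ∀ m, m ≠ a + 1 → g m = f m := by
      intro m hm
      simp only [hg]
      rw [if_neg hm]
    have hg_a : g a = u - 1 := by rw [hg_eq a (by omega), hfa]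
    have hg_b : g (a + 1) = u - 1 := by simp [hg]
    have hg_c : g (a + 2) = u := by rw [hg_eq (a + 2) (by omega), hfc]
    have hgstep : ∀ m, g (m + 1) = g m ∨ g (m + 1) = g m + 1 := by
      intro m
      by_cases h1 : m + 1 = a + 1
      · have hma : m = a := by omega
        subst hma
        rw [hg_b, hg_a]
        left; rfl
      · by_cases h2 : m = a + 1
        · subst h2
          right
          rw [show (a + 1) + 1 = a + 2 from rfl, hg_c, hg_b]
          omega
        · rw [hg_eq (m + 1) h1, hg_eq m h2]
          exact hfstep m
    set B : Finset (Fin n) := univ.filter (fun i : Fin n => f ((i : ℕ) + 1) = f (i : ℕ) + 1)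
      with hB
    set B' : Finset (Fin n) := univ.filter (fun i : Fin n => g ((i : ℕ) + 1) = g (i : ℕ) + 1)
      with hB'
    have hpcB : ∀ m ≤ n, pathCount B m = f m := pc_of_step f hf0 hfstep
    have hpcB' : ∀ m ≤ n, pathCount B' m = g m := pc_of_step g hg0 hgstep
    -- both are bases
    have hBbase : M.IsBase B := by
      apply (hbases B).mpr
      have hcard : B.card = k := by
        rw [← pc_eq_card B le_rfl, hpcB n le_rfl, hfn]
      refine ⟨hcard, ?_⟩
      intro m
      rcases le_or_gt m n with hm | hm
      · rw [hpcB m hm]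
        exact ⟨le_max_left _ _, hfub m⟩
      · rw [pc_eq_card B (le_of_lt hm), pc_eq_card SL (le_of_lt hm),
          pc_eq_card SU (le_of_lt hm), hcard, hL, hU]
        exact ⟨le_rfl, le_rfl⟩
    have hBbase' : M.IsBase B' := by
      apply (hbases B').mpr
      have hcard : B'.card = k := by
        rw [← pc_eq_card B' le_rfl, hpcB' n le_rfl, hg_eq n (by omega), hfn]
      refine ⟨hcard, ?_⟩
      intro m
      rcases le_or_gt m n with hm | hm
      · rw [hpcB' m hm]
        by_cases hma : m = a + 1
        · subst hma
          rw [hg_b, ← hs, ← hu]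
          omega
        · rw [hg_eq m hma]
          exact ⟨le_max_left _ _, hfub m⟩
      · rw [pc_eq_card B' (le_of_lt hm), pc_eq_card SL (le_of_lt hm),
          pc_eq_card SU (le_of_lt hm), hcard, hL, hU]
        exact ⟨le_rfl, le_rfl⟩
    -- membership facts
    have hu1 : 1 ≤ u := by omega
    have hxaB : xa ∈ B := by
      simp only [hB, mem_filter, mem_univ, true_and, hxa]
      show f (a + 1) = f a + 1
      rw [hfa, hfb]
      omega
    have hxbB : xb ∉ B := by
      simp only [hB, mem_filter, mem_univ, true_and, hxb]
      show ¬ f (a + 1 + 1) = f (a + 1) + 1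
      rw [show (a + 1) + 1 = a + 2 from rfl, hfc, hfb]
      omega
    have hxaB' : xa ∉ B' := by
      simp only [hB', mem_filter, mem_univ, true_and, hxa]
      show ¬ g (a + 1) = g a + 1
      rw [hg_b, hg_a]
      omega
    have hxbB' : xb ∈ B' := by
      simp only [hB', mem_filter, mem_univ, true_and, hxb]
      show g (a + 1 + 1) = g (a + 1) + 1
      rw [show (a + 1) + 1 = a + 2 from rfl, hg_c, hg_b]
      omega
    have hsame : ∀ i : Fin n, (i : ℕ) ≠ a → (i : ℕ) ≠ a + 1 → (i ∈ B ↔ i ∈ B') := by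
      intro i hia hib
      simp only [hB, hB', mem_filter, mem_univ, true_and]
      rw [hg_eq ((i : ℕ) + 1) (by omega), hg_eq (i : ℕ) hib]
    -- derive the contradiction
    have hxab : xb ≠ xa := by
      intro h
      have := congrArg Fin.val h
      simp only [hxa, hxb] at this
      omega
    have hswap : ∀ P : Finset (Fin n), xa ∈ P → xb ∉ P →
        (B ∩ P).card = (B' ∩ P).card + 1 := by
      intro P hxaP hxbP
      have hset : B ∩ P = insert xa (B' ∩ P) := by
        ext i
        simp only [mem_inter, mem_insert]
        by_cases hia : i = xa
        · subst hia
          simp [hxaB, hxaP]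
        · by_cases hib : i = xb
          · subst hib
            simp [hxbB, hxbP, hxab]
          · have hia' : (i : ℕ) ≠ a := fun h => hia (Fin.ext h)
            have hib' : (i : ℕ) ≠ a + 1 := fun h => hib (Fin.ext h)
            rw [hsame i hia' hib']
            simp [hia]
      rw [hset, card_insert_of_notMem (by simp [hxaB'])]
    have hcover : ∀ i : Fin n, i ∈ E₁ ∨ i ∈ E₂ := by
      intro i
      have : i ∈ E₁ ∪ E₂ := by rw [hun, hE]; exact mem_univ i
      exact mem_union.mp this
    have hk1 := hkey B hBbase
    have hk1' := hkey B' hBbase'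
    by_cases hxa1 : xa ∈ E₁
    · by_cases hxb1 : xb ∈ E₁
      · exact hflip ⟨fun _ => hxb1, fun _ => hxa1⟩
      · have := hswap E₁ hxa1 hxb1
        omega
    · by_cases hxb1 : xb ∈ E₁
      · have hxa2 : xa ∈ E₂ := (hcover xa).resolve_left hxa1
        have hxb2 : xb ∉ E₂ := disjoint_left.mp hdisj hxb1
        have := hswap E₂ hxa2 hxb2
        omega
      · exact hflip ⟨fun h => absurd h hxa1, fun h => absurd h hxb1⟩
end

section
/- Let M be a matroid whose base polytope indicator function decomposes as 𝟙_{P(M)} = Σᵢ aᵢ 𝟙_{P(Sᵢ)} for integers aᵢ and matroids Sᵢ on the same ground set with the same rank. Then ehr(M,t) = Σᵢ aᵢ ehr(Sᵢ,t) as polynomials in t. -/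
open Finset Pointwise

lemma basePolytope_subset_Icc {α : Type} [DecidableEq α] [Fintype α] (M : Matr α) :
    basePolytope M ⊆ Set.Icc (0 : α → ℝ) 1 := by
  apply convexHull_min _ (convex_Icc _ _)
  rintro x ⟨B, hB, rfl⟩
  refine ⟨fun i => ?_, fun i => ?_⟩ <;> dsimp <;> split <;> norm_num


/-- **The Ehrhart polynomial is a valuative invariant.** Any integer linear relation
among indicator functions of base polytopes passes to the Ehrhart polynomials. -/
theorem ehrhart_valuative (n m : ℕ) (M : Matr (Fin n)) (S : Fin m → Matr (Fin n))
    (a : Fin m → ℤ)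
    (hE : ∀ i, (S i).E = M.E) (hrk : ∀ i, (S i).rk (S i).E = M.rk M.E)
    (hind : Set.indicator (basePolytope M) (fun _ => (1 : ℤ)) =
      ∑ i : Fin m, a i • Set.indicator (basePolytope (S i)) (fun _ => (1 : ℤ)))
    (p : Polynomial ℚ) (q : Fin m → Polynomial ℚ)
    (hp : IsEhrhart M p) (hq : ∀ i, IsEhrhart (S i) (q i)) :
    p = ∑ i : Fin m, (a i : ℚ) • q i := by
  classical
  have key : ∀ t : ℕ, 0 < t →
      ((Set.ncard {x : Fin n → ℤ | (fun i => (x i : ℝ)) ∈ (t : ℝ) • basePolytope M} : ℤ)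
        = ∑ i : Fin m, a i *
          (Set.ncard {x : Fin n → ℤ | (fun i => (x i : ℝ)) ∈ (t : ℝ) • basePolytope (S i)} : ℤ)) := by
    intro t ht
    have htR : (0 : ℝ) < t := by exact_mod_cast ht
    set T : Finset (Fin n → ℤ) := Finset.Icc 0 (fun _ => (t : ℤ)) with hT
    have hsub : ∀ N : Matr (Fin n), ∀ x : Fin n → ℤ,
        ((fun i => (x i : ℝ)) ∈ (t : ℝ) • basePolytope N) → x ∈ T := by
      intro N x hx
      obtain ⟨y, hy, hxy⟩ := hx
      have hy' := basePolytope_subset_Icc N hy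
      rw [hT, Finset.mem_Icc]
      constructor <;> intro i
      · have h1 : (0 : ℝ) ≤ y i := hy'.1 i
        have h2 : ((x i : ℝ)) = t * y i := by
          have := congrFun hxy i; simpa [Pi.smul_apply] using this.symm
        have : (0 : ℝ) ≤ (x i : ℝ) := by rw [h2]; positivity
        exact_mod_cast this
      · have h1 : y i ≤ 1 := hy'.2 i
        have h2 : ((x i : ℝ)) = t * y i := by
          have := congrFun hxy i; simpa [Pi.smul_apply] using this.symm
        have : (x i : ℝ) ≤ t := by
          rw [h2]; nlinarith
        exact_mod_cast this
    have hset : ∀ N : Matr (Fin n),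
        {x : Fin n → ℤ | (fun i => (x i : ℝ)) ∈ (t : ℝ) • basePolytope N}
          = ↑(T.filter fun x => (fun i => (x i : ℝ)) ∈ (t : ℝ) • basePolytope N) := by
      intro N
      ext x
      simp only [Set.mem_setOf_eq, Finset.coe_filter]
      exact ⟨fun h => ⟨hsub N x h, h⟩, fun h => h.2⟩
    have hcard : ∀ N : Matr (Fin n),
        (Set.ncard {x : Fin n → ℤ | (fun i => (x i : ℝ)) ∈ (t : ℝ) • basePolytope N} : ℤ)
          = ∑ x ∈ T, Set.indicator (basePolytope N) (fun _ => (1 : ℤ))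
              ((t : ℝ)⁻¹ • fun i => (x i : ℝ)) := by
      intro N
      rw [hset N, Set.ncard_coe_finset, Finset.card_filter]
      push_cast
      refine Finset.sum_congr rfl fun x _ => ?_
      rw [Set.indicator_apply]
      congr 1
      simp only [eq_iff_iff]
      exact Set.mem_smul_set_iff_inv_smul_mem₀ (ne_of_gt htR) _ _
    rw [hcard M]
    have : ∀ x : Fin n → ℤ,
        Set.indicator (basePolytope M) (fun _ => (1 : ℤ)) ((t : ℝ)⁻¹ • fun i => (x i : ℝ))
          = ∑ i : Fin m, a i * Set.indicator (basePolytope (S i)) (fun _ => (1 : ℤ))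
              ((t : ℝ)⁻¹ • fun i => (x i : ℝ)) := by
      intro x
      have := congrFun hind ((t : ℝ)⁻¹ • fun i => (x i : ℝ))
      simpa [Finset.sum_apply, smul_eq_mul] using this
    rw [Finset.sum_congr rfl fun x _ => this x, Finset.sum_comm]
    refine Finset.sum_congr rfl fun i _ => ?_
    rw [hcard (S i), Finset.mul_sum]
  -- polynomial identity from agreement at infinitely many points
  have hroot : ∀ t : ℕ, 0 < t → (p - ∑ i : Fin m, (a i : ℚ) • q i).IsRoot (t : ℚ) := by
    intro t ht
    have h1 := hp t ht
    have h2 := fun i => hq i t ht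
    simp only [Polynomial.IsRoot, Polynomial.eval_sub, Polynomial.eval_finset_sum,
      Polynomial.eval_smul, smul_eq_mul, sub_eq_zero, h1]
    have := key t ht
    rw [Finset.sum_congr rfl fun i _ => by rw [h2 i]]
    push_cast [this]
    push_cast
    exact_mod_cast this
  have hzero : p - ∑ i : Fin m, (a i : ℚ) • q i = 0 := by
    apply Polynomial.eq_zero_of_infinite_isRoot
    apply Set.infinite_of_injective_forall_mem
      (f := fun k : ℕ => ((k + 1 : ℕ) : ℚ))
    · intro x y hxy
      simpa using hxy
    · intro k
      exact hroot (k + 1) (Nat.succ_pos k)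
  linear_combination hzero
end
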